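/- arXiv:1810.04117 — 7 statements merged into one kernel-verified Lean document; each statement's English description precedes it below -/
import Mathlib

section
/- For every integer p ≥ 1 and every natural number n, the number of p-Łukasiewicz words of length n equals the number of quarter-plane p-tandem words of length n. -/
/-- Words over the alphabet `Σ_p = {-1, 0, 1, …, p}`. -/
def SigmaWord (p : ℕ) (w : List ℤ) : Prop := ∀ a ∈ w, -1 ≤ a ∧ a ≤ (p : ℤ)

/-- A `p`-Łukasiewicz word: a word over `Σ_p` all of whose prefix sums are
nonnegative and whose total sum is `0`. -/
def Lukasiewicz (p : ℕ) (w : List ℤ) : Prop :=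
  SigmaWord p w ∧ (∀ i, 0 ≤ (w.take i).sum) ∧ w.sum = 0

/-- The step set `S_p`: the vectors `(-j, p-j)` for `0 ≤ j ≤ p` together with `(1, -1)`. -/
def InSp (p : ℕ) (s : ℤ × ℤ) : Prop :=
  s = (1, -1) ∨ ∃ j : ℕ, j ≤ p ∧ s = (-(j : ℤ), (p : ℤ) - (j : ℤ))

/-- A quarter-plane `p`-tandem word: a word over `S_p` all of whose prefix sums
have both coordinates nonnegative. -/
def Tandem (p : ℕ) (w : List (ℤ × ℤ)) : Prop :=
  (∀ a ∈ w, InSp p a) ∧ ∀ i, 0 ≤ ((w.take i).sum).1 ∧ 0 ≤ ((w.take i).sum).2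

namespace LukTandem

/-- the kernel `K`. -/
noncomputable def KK (p : ℕ) : ℕ → ℤ → ℤ
  | 0, d => if d = 0 then 1 else 0
  | (u+1), d =>
      (∑ a ∈ Finset.Icc (-1 : ℤ) (p : ℤ), KK p u (d - 1 - a))
        - ∑ j ∈ Finset.range (p+1), if j ≤ u then KK p (u - j) (d - 1 + (j:ℤ) - (p:ℤ)) else 0
  termination_by u _ => u
  decreasing_by
  · omega
  · omega

lemma KK_neg (p : ℕ) : ∀ (u : ℕ) (d : ℤ), d < 0 → KK p u d = 0 := by
  intro u
  induction u using Nat.strong_induction_on with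
  | _ u ih =>
    intro d hd
    match u with
    | 0 => simp [KK]; omega
    | (v+1) =>
      rw [KK]
      have h1 : ∀ a ∈ Finset.Icc (-1 : ℤ) (p : ℤ), KK p v (d - 1 - a) = 0 := by
        intro a ha
        simp only [Finset.mem_Icc] at ha
        exact ih v (by omega) _ (by omega)
      have h2 : ∀ j ∈ Finset.range (p+1),
          (if j ≤ v then KK p (v - j) (d - 1 + (j:ℤ) - (p:ℤ)) else 0) = 0 := by
        intro j hj
        simp only [Finset.mem_range] at hj
        split
        · exact ih (v - j) (by omega) _ (by push_cast; omega)
        · rfl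
      rw [Finset.sum_congr rfl h1, Finset.sum_congr rfl h2]
      simp

lemma KK_zero (p : ℕ) : ∀ u : ℕ, KK p u 0 = 1 := by
  intro u
  induction u using Nat.strong_induction_on with
  | _ u ih =>
    match u with
    | 0 => simp [KK]
    | (v+1) =>
      rw [KK]
      have h2 : ∀ j ∈ Finset.range (p+1),
          (if j ≤ v then KK p (v - j) ((0:ℤ) - 1 + (j:ℤ) - (p:ℤ)) else 0) = 0 := by
        intro j hj
        simp only [Finset.mem_range] at hj
        split
        · exact KK_neg p _ _ (by push_cast; omega)
        · rfl
      rw [Finset.sum_congr rfl h2]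
      have h1 : (∑ a ∈ Finset.Icc (-1 : ℤ) (p : ℤ), KK p v ((0:ℤ) - 1 - a)) = 1 := by
        rw [Finset.sum_eq_single (-1 : ℤ)]
        · have := ih v (by omega); simpa using this
        · intro a ha hne
          simp only [Finset.mem_Icc] at ha
          exact KK_neg p _ _ (by omega)
        · intro h; simp at h
      rw [h1]
      simp


/-- `K` with integer index, zero for negative index. -/
noncomputable def KZ (p : ℕ) (u : ℤ) (d : ℤ) : ℤ := if 0 ≤ u then KK p u.toNat d else 0

lemma KZ_negu (p : ℕ) {u : ℤ} (h : u < 0) (d : ℤ) : KZ p u d = 0 := by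
  simp [KZ, not_le.mpr h]

lemma KZ_negd (p : ℕ) (u : ℤ) {d : ℤ} (h : d < 0) : KZ p u d = 0 := by
  unfold KZ
  split
  · exact KK_neg p _ _ h
  · rfl

lemma KZ_zero (p : ℕ) {u : ℤ} (h : 0 ≤ u) : KZ p u 0 = 1 := by
  simp [KZ, h, KK_zero]

lemma KZ_rec (p : ℕ) {u : ℤ} (h : 0 ≤ u) (d : ℤ) :
    KZ p (u + 1) d =
      (∑ a ∈ Finset.Icc (-1 : ℤ) (p : ℤ), KZ p u (d - 1 - a))
        - ∑ j ∈ Finset.range (p+1), KZ p (u - j) (d - 1 + (j:ℤ) - (p:ℤ)) := by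
  have hu1 : (0:ℤ) ≤ u + 1 := by omega
  have htn : (u+1).toNat = u.toNat + 1 := by omega
  rw [KZ, if_pos hu1, htn, KK]
  congr 1
  · apply Finset.sum_congr rfl
    intro a _
    rw [KZ, if_pos h]
  · apply Finset.sum_congr rfl
    intro j hj
    simp only [Finset.mem_range] at hj
    by_cases hju : (j:ℤ) ≤ u
    · have : j ≤ u.toNat := by omega
      rw [if_pos this, KZ, if_pos (by omega)]
      congr 1
      omega
    · rw [if_neg (by omega), KZ_negu p (by omega)]

lemma KZ_base (p : ℕ) (d : ℤ) : KZ p 0 d = if d = 0 then 1 else 0 := by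
  simp [KZ, KK]

lemma Icc_neg_one_eq (p : ℕ) :
    Finset.Icc (-1:ℤ) (p:ℤ) = insert (-1:ℤ) (Finset.Icc 0 (p:ℤ)) := by
  ext x; simp only [Finset.mem_Icc, Finset.mem_insert]; omega

lemma sum_Icc_split (m : ℤ) (hm : 0 ≤ m) (f : ℤ → ℤ) :
    ∑ s ∈ Finset.Icc (0:ℤ) m, f s = (∑ s ∈ Finset.Icc (0:ℤ) (m-1), f s) + f m := by
  have : Finset.Icc (0:ℤ) m = insert m (Finset.Icc 0 (m-1)) := by
    ext x; simp only [Finset.mem_Icc, Finset.mem_insert]; omega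
  rw [this, Finset.sum_insert (by simp [Finset.mem_Icc]), add_comm]

lemma ddagger (p : ℕ) : ∀ u : ℤ, 0 ≤ u → ∀ h : ℤ, 0 ≤ h →
    ∑ j ∈ Finset.range (p+1), ∑ s ∈ Finset.Icc (0:ℤ) ((p:ℤ) - (j:ℤ)), KZ p (u - j) (h - s)
      = ∑ a ∈ Finset.Icc (-1:ℤ) (p:ℤ), KZ p u (h - a) := by
  apply Int.le_induction
  · intro h hh
    have L : ∀ j ∈ Finset.range (p+1), j ≠ 0 →
        (∑ s ∈ Finset.Icc (0:ℤ) ((p:ℤ) - (j:ℤ)), KZ p ((0:ℤ) - j) (h - s)) = 0 := by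
      intro j _ hj
      apply Finset.sum_eq_zero
      intro s _
      exact KZ_negu p (by omega) _
    rw [Finset.sum_eq_single 0 L (by simp)]
    simp only [Nat.cast_zero, sub_zero]
    have e1 : ∀ s ∈ Finset.Icc (0:ℤ) (p:ℤ), KZ p 0 (h - s) = if s = h then 1 else 0 := by
      intro s _; rw [KZ_base]; congr 1; simp only [eq_iff_iff]; omega
    have e2 : ∀ a ∈ Finset.Icc (-1:ℤ) (p:ℤ), KZ p 0 (h - a) = if a = h then 1 else 0 := by
      intro a _; rw [KZ_base]; congr 1; simp only [eq_iff_iff]; omega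
    rw [Finset.sum_congr rfl e1, Finset.sum_congr rfl e2,
        Finset.sum_ite_eq' _ h (fun _ => (1:ℤ)), Finset.sum_ite_eq' _ h (fun _ => (1:ℤ))]
    simp only [Finset.mem_Icc]
    congr 1
    simp only [eq_iff_iff]; omega
  · intro u hu ih h hh
    -- LHS split j = 0
    rw [Finset.sum_range_succ']
    have lhs1 : ∀ j ∈ Finset.range p,
        (∑ s ∈ Finset.Icc (0:ℤ) ((p:ℤ) - ((j:ℤ)+1)), KZ p (u + 1 - ((j:ℤ)+1)) (h - s))
          = ∑ s ∈ Finset.Icc (0:ℤ) ((p:ℤ) - 1 - (j:ℤ)), KZ p (u - j) (h - s) := by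
      intro j _
      have e1 : (p:ℤ) - ((j:ℤ)+1) = (p:ℤ) - 1 - (j:ℤ) := by ring
      have e2 : u + 1 - ((j:ℤ)+1) = u - j := by ring
      rw [e1, e2]
    have cast1 : ∀ j : ℕ, ((j+1 : ℕ) : ℤ) = (j:ℤ) + 1 := by intro j; push_cast; ring
    simp only [cast1]
    rw [Finset.sum_congr rfl lhs1]
    -- RHS split a = -1
    rw [Icc_neg_one_eq, Finset.sum_insert (by simp [Finset.mem_Icc])]
    have e3 : h - (-1) = h + 1 := by ring
    rw [e3]
    -- j = 0 term of LHS
    have e4 : u + 1 - ((0:ℕ):ℤ) = u + 1 := by simp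
    rw [e4]
    have key : ∑ j ∈ Finset.range p, ∑ s ∈ Finset.Icc (0:ℤ) ((p:ℤ) - 1 - (j:ℤ)), KZ p (u - j) (h - s)
        = KZ p (u+1) (h+1) := by
      rw [KZ_rec p hu]
      have e5 : ∀ a ∈ Finset.Icc (-1:ℤ) (p:ℤ), KZ p u (h + 1 - 1 - a) = KZ p u (h - a) := by
        intro a _; congr 1; ring
      rw [Finset.sum_congr rfl e5, ← ih h hh]
      have e6 : ∀ j ∈ Finset.range (p+1),
          KZ p (u - j) (h + 1 - 1 + (j:ℤ) - (p:ℤ)) = KZ p (u - j) (h - ((p:ℤ) - (j:ℤ))) := by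
        intro j _; congr 1; ring
      rw [Finset.sum_congr rfl e6]
      rw [← Finset.sum_sub_distrib]
      have e7 : ∀ j ∈ Finset.range (p+1),
          (∑ s ∈ Finset.Icc (0:ℤ) ((p:ℤ) - (j:ℤ)), KZ p (u - j) (h - s)) - KZ p (u - j) (h - ((p:ℤ) - (j:ℤ)))
            = ∑ s ∈ Finset.Icc (0:ℤ) ((p:ℤ) - (j:ℤ) - 1), KZ p (u - j) (h - s) := by
        intro j hj
        simp only [Finset.mem_range] at hj
        rw [sum_Icc_split ((p:ℤ) - (j:ℤ)) (by omega) (fun s => KZ p (u - j) (h - s))]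
        ring
      rw [Finset.sum_congr rfl e7, Finset.sum_range_succ]
      have e8 : (∑ s ∈ Finset.Icc (0:ℤ) ((p:ℤ) - ((p:ℕ):ℤ) - 1), KZ p (u - p) (h - s)) = 0 := by
        have : Finset.Icc (0:ℤ) ((p:ℤ) - ((p:ℕ):ℤ) - 1) = ∅ := by
          apply Finset.Icc_eq_empty; omega
        rw [this, Finset.sum_empty]
      rw [e8, add_zero]
      apply Finset.sum_congr rfl
      intro j _
      apply Finset.sum_congr _ (fun s _ => rfl)
      congr 1
      ring
    rw [key]
    ring

lemma Mlem (p : ℕ) (u : ℤ) (hu : 0 ≤ u) : ∀ v : ℤ, 0 ≤ v → ∀ h : ℤ, 0 ≤ h →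
    (∑ s ∈ Finset.Icc (0:ℤ) (v-1), KZ p (u+1) (h-s))
      + ∑ j ∈ Finset.range (p+1), ∑ s ∈ Finset.Icc (0:ℤ) (v + (p:ℤ) - (j:ℤ)), KZ p (u - j) (h - s)
    = ∑ a ∈ Finset.Icc (-1:ℤ) (p:ℤ), ∑ s ∈ Finset.Icc (0:ℤ) v, KZ p u (h - a - s) := by
  apply Int.le_induction
  · intro h hh
    have e0 : Finset.Icc (0:ℤ) (0-1) = ∅ := by apply Finset.Icc_eq_empty; omega
    rw [e0, Finset.sum_empty, zero_add]
    have e1 : ∀ j ∈ Finset.range (p+1),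
        (∑ s ∈ Finset.Icc (0:ℤ) (0 + (p:ℤ) - (j:ℤ)), KZ p (u - j) (h - s))
          = ∑ s ∈ Finset.Icc (0:ℤ) ((p:ℤ) - (j:ℤ)), KZ p (u - j) (h - s) := by
      intro j _; congr 2; ring
    rw [Finset.sum_congr rfl e1, ddagger p u hu h hh]
    apply Finset.sum_congr rfl
    intro a _
    rw [show Finset.Icc (0:ℤ) 0 = {0} from rfl, Finset.sum_singleton, sub_zero]
  · intro v hv ih h hh
    have e1 : Finset.Icc (0:ℤ) (v+1-1) = Finset.Icc (0:ℤ) v := by congr 1; ring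
    rw [e1, sum_Icc_split v hv (fun s => KZ p (u+1) (h-s))]
    have e2 : ∀ j ∈ Finset.range (p+1),
        (∑ s ∈ Finset.Icc (0:ℤ) (v + 1 + (p:ℤ) - (j:ℤ)), KZ p (u - j) (h - s))
          = (∑ s ∈ Finset.Icc (0:ℤ) (v + (p:ℤ) - (j:ℤ)), KZ p (u - j) (h - s))
            + KZ p (u - j) (h - (v + 1 + (p:ℤ) - (j:ℤ))) := by
      intro j hj
      simp only [Finset.mem_range] at hj
      rw [sum_Icc_split (v + 1 + (p:ℤ) - (j:ℤ)) (by omega) (fun s => KZ p (u - j) (h - s)),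
        show v + 1 + (p:ℤ) - (j:ℤ) - 1 = v + (p:ℤ) - (j:ℤ) from by ring]
    rw [Finset.sum_congr rfl e2, Finset.sum_add_distrib]
    have e3 : ∀ a ∈ Finset.Icc (-1:ℤ) (p:ℤ),
        (∑ s ∈ Finset.Icc (0:ℤ) (v+1), KZ p u (h - a - s))
          = (∑ s ∈ Finset.Icc (0:ℤ) v, KZ p u (h - a - s)) + KZ p u (h - a - (v+1)) := by
      intro a _
      rw [sum_Icc_split (v+1) (by omega) (fun s => KZ p u (h - a - s)),
        show (v:ℤ) + 1 - 1 = v from by ring]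
    rw [Finset.sum_congr rfl e3, Finset.sum_add_distrib, ← ih h hh]
    have key : KZ p (u+1) (h - v) + ∑ j ∈ Finset.range (p+1), KZ p (u - j) (h - (v + 1 + (p:ℤ) - (j:ℤ)))
        = ∑ a ∈ Finset.Icc (-1:ℤ) (p:ℤ), KZ p u (h - a - (v+1)) := by
      rw [KZ_rec p hu (h - v)]
      have c1 : ∀ a ∈ Finset.Icc (-1:ℤ) (p:ℤ), KZ p u (h - v - 1 - a) = KZ p u (h - a - (v+1)) := by
        intro a _; congr 1; ring
      have c2 : ∀ j ∈ Finset.range (p+1),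
          KZ p (u - j) (h - v - 1 + (j:ℤ) - (p:ℤ)) = KZ p (u - j) (h - (v + 1 + (p:ℤ) - (j:ℤ))) := by
        intro j _; congr 1; ring
      rw [Finset.sum_congr rfl c1, Finset.sum_congr rfl c2]
      ring
    linarith [key]

/-- the step Finset. -/
def Steps (p : ℕ) : Finset (ℤ × ℤ) :=
  insert (1,-1) ((Finset.range (p+1)).image fun j : ℕ => (-(j:ℤ), (p:ℤ)-(j:ℤ)))

/-- the weight μ. -/
noncomputable def mu (p : ℕ) (h : ℤ) (z : ℤ × ℤ) : ℤ := ∑ s ∈ Finset.Icc (0:ℤ) z.2, KZ p z.1 (h - s)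

lemma mu_negh (p : ℕ) {h : ℤ} (hh : h < 0) (z : ℤ × ℤ) : mu p h z = 0 := by
  apply Finset.sum_eq_zero
  intro s hs
  simp only [Finset.mem_Icc] at hs
  exact KZ_negd p _ (by omega)

lemma mu_zeroh (p : ℕ) {z : ℤ × ℤ} (h1 : 0 ≤ z.1) (h2 : 0 ≤ z.2) : mu p 0 z = 1 := by
  unfold mu
  rw [Finset.sum_eq_single 0]
  · simpa using KZ_zero p h1
  · intro s hs hne
    simp only [Finset.mem_Icc] at hs
    exact KZ_negd p _ (by omega)
  · intro hmem
    simp only [Finset.mem_Icc] at hmem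
    omega

lemma star (p : ℕ) (h : ℤ) (u v : ℤ) (hu : 0 ≤ u) (hv : 0 ≤ v) :
    ∑ s ∈ Steps p, mu p h ((u,v) + s)
      = if 0 ≤ h then ∑ l ∈ Finset.Icc (-1:ℤ) (p:ℤ), mu p (h - l) (u,v) else 0 := by
  by_cases hh : 0 ≤ h
  swap
  · rw [if_neg hh]
    apply Finset.sum_eq_zero
    intro s _
    exact mu_negh p (by omega) _
  rw [if_pos hh]
  unfold Steps
  have hnm : ((1:ℤ),(-1:ℤ)) ∉ (Finset.range (p+1)).image (fun j : ℕ => (-(j:ℤ), (p:ℤ)-(j:ℤ))) := by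
    intro hmem
    obtain ⟨j, hj, heq⟩ := Finset.mem_image.mp hmem
    rw [Prod.mk.injEq] at heq
    omega
  rw [Finset.sum_insert hnm]
  rw [Finset.sum_image (by
    intro i _ j _ hij
    rw [Prod.mk.injEq] at hij
    omega)]
  have t1 : mu p h ((u,v) + (1,-1)) = ∑ s ∈ Finset.Icc (0:ℤ) (v-1), KZ p (u+1) (h-s) := by
    rw [show ((u,v) + ((1:ℤ),(-1:ℤ))) = (u+1, v-1) from by rw [Prod.mk_add_mk, Prod.mk.injEq]; exact ⟨by ring, by ring⟩]
    rfl
  have t2 : ∀ j ∈ Finset.range (p+1), mu p h ((u,v) + (-(j:ℤ), (p:ℤ)-(j:ℤ)))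
      = ∑ s ∈ Finset.Icc (0:ℤ) (v + (p:ℤ) - (j:ℤ)), KZ p (u - j) (h - s) := by
    intro j _
    rw [show ((u,v) + (-(j:ℤ), (p:ℤ)-(j:ℤ))) = (u - j, v + (p:ℤ) - (j:ℤ)) from by
      rw [Prod.mk_add_mk, Prod.mk.injEq]; exact ⟨by ring, by ring⟩]
    rfl
  have t3 : ∀ l ∈ Finset.Icc (-1:ℤ) (p:ℤ), mu p (h - l) (u,v)
      = ∑ s ∈ Finset.Icc (0:ℤ) v, KZ p u (h - l - s) := by
    intro l _
    rfl
  rw [t1, Finset.sum_congr rfl t2, Finset.sum_congr rfl t3]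
  exact Mlem p u hu v hv h hh

variable {M : Type*} [AddCommGroup M] [DecidableEq M]

/-- generic constrained words: length `n`, letters in `F`, all suffix (drop) sums in `C`,
total sum `z`. -/
def GW (F : Finset M) (C : Set M) (n : ℕ) (z : M) : Type _ :=
  {w : List M // w.length = n ∧ (∀ a ∈ w, a ∈ F) ∧ (∀ i, (w.drop i).sum ∈ C) ∧ w.sum = z}

lemma GW_zero_unique (F : Finset M) (C : Set M) (hC0 : (0:M) ∈ C) :
    Nonempty (Unique (GW F C 0 0)) := by
  refine ⟨⟨⟨⟨([] : List M), rfl, by simp, by intro i; simp [hC0], rfl⟩⟩, ?_⟩⟩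
  rintro ⟨w, hlen, -⟩
  apply Subtype.ext
  exact List.length_eq_zero_iff.mp hlen

lemma GW_zero_empty (F : Finset M) (C : Set M) {z : M} (hz : z ≠ 0) :
    IsEmpty (GW F C 0 z) := by
  constructor
  rintro ⟨w, hlen, -, -, hsum⟩
  apply hz
  rw [List.length_eq_zero_iff.mp hlen] at hsum
  simpa using hsum.symm

lemma GW_not_mem_empty (F : Finset M) (C : Set M) {n : ℕ} {z : M} (hz : z ∉ C) :
    IsEmpty (GW F C n z) := by
  constructor
  rintro ⟨w, hlen, -, hC, hsum⟩
  exact hz (by simpa [hsum] using hC 0)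

/-- cons decomposition. -/
def consEquiv (F : Finset M) (C : Set M) (n : ℕ) (z : M) (hz : z ∈ C) :
    GW F C (n+1) z ≃ (Σ s : {x // x ∈ F}, GW F C n (z - s.1)) where
  toFun x := by
    obtain ⟨w, hlen, hF, hC, hsum⟩ := x
    have hne : w ≠ [] := by intro h; rw [h] at hlen; simp at hlen
    refine ⟨⟨w.head hne, hF _ (List.head_mem hne)⟩, ⟨w.tail, ?_, ?_, ?_, ?_⟩⟩
    · rw [List.length_tail, hlen]; rfl
    · intro a ha; exact hF a (List.mem_of_mem_tail ha)
    · intro i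
      have : w.tail.drop i = w.drop (i+1) := by
        rw [← List.drop_one, List.drop_drop, Nat.add_comm]
      rw [this]; exact hC (i+1)
    · have : w.head hne + w.tail.sum = z := by
        rw [← hsum]
        conv_rhs => rw [← List.cons_head_tail hne]
        rw [List.sum_cons]
      simp only [← this]; abel
  invFun y := by
    obtain ⟨⟨s, hs⟩, ⟨t, hlen, hF, hC, hsum⟩⟩ := y
    refine ⟨s :: t, by simp [hlen], ?_, ?_, ?_⟩
    · intro a ha
      rcases List.mem_cons.mp ha with h | h
      · rwa [h]
      · exact hF a h
    · intro i
      match i with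
      | 0 => simpa [hsum] using hz
      | (i+1) => simpa using hC i
    · rw [List.sum_cons, hsum]; abel
  left_inv := by
    rintro ⟨w, hlen, hF, hC, hsum⟩
    apply Subtype.ext
    simp only []
    exact List.cons_head_tail _
  right_inv := by
    rintro ⟨⟨s, hs⟩, ⟨t, hlen, hF, hC, hsum⟩⟩
    rfl

lemma GW_finite (F : Finset M) (C : Set M) : ∀ (n : ℕ) (z : M), Finite (GW F C n z) := by
  intro n
  induction n with
  | zero =>
    intro z
    by_cases hz : z = 0
    · subst hz
      rcases Classical.em ((0:M) ∈ C) with h | h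
      · obtain ⟨u⟩ := GW_zero_unique F C h
        exact @Finite.of_subsingleton _ u.instSubsingleton
      · exact @Finite.of_subsingleton _ (GW_not_mem_empty F C h).instSubsingleton
    · exact @Finite.of_subsingleton _ (GW_zero_empty F C hz).instSubsingleton
  | succ n ih =>
    intro z
    rcases Classical.em (z ∈ C) with hz | hz
    · have : ∀ s : {x // x ∈ F}, Finite (GW F C n (z - s.1)) := fun s => ih _
      exact Finite.of_equiv _ (consEquiv F C n z hz).symm
    · exact @Finite.of_subsingleton _ (GW_not_mem_empty F C hz).instSubsingleton

lemma GW_card (F : Finset M) (C : Set M) (hC0 : (0:M) ∈ C)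
    (cnt : ℕ → M → ℕ)
    (hcnt00 : cnt 0 0 = 1) (hcnt0ne : ∀ z : M, z ≠ 0 → cnt 0 z = 0)
    (hcntS : ∀ (n : ℕ) (z : M), z ∈ C → cnt (n+1) z = ∑ s ∈ F, cnt n (z - s))
    (hcntSn : ∀ (n : ℕ) (z : M), z ∉ C → cnt (n+1) z = 0) :
    ∀ (n : ℕ) (z : M), Nat.card (GW F C n z) = cnt n z := by
  intro n
  induction n with
  | zero =>
    intro z
    by_cases hz : z = 0
    · subst hz
      obtain ⟨u⟩ := GW_zero_unique F C hC0
      haveI := u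
      rw [hcnt00, Nat.card_unique]
    · haveI := GW_zero_empty F C (z := z) hz
      rw [hcnt0ne z hz, Nat.card_of_isEmpty]
  | succ n ih =>
    intro z
    rcases Classical.em (z ∈ C) with hz | hz
    · rw [hcntS n z hz, Nat.card_congr (consEquiv F C n z hz)]
      haveI : ∀ s : {x // x ∈ F}, Finite (GW F C n (z - s.1)) := fun s => GW_finite F C n _
      haveI : ∀ s : {x // x ∈ F}, Fintype (GW F C n (z - s.1)) := fun s => Fintype.ofFinite _
      rw [Nat.card_eq_fintype_card, Fintype.card_sigma]
      rw [← Finset.sum_coe_sort F (fun s => cnt n (z - s))]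
      apply Finset.sum_congr rfl
      intro s _
      rw [← Nat.card_eq_fintype_card, ih]
    · haveI := GW_not_mem_empty F C (n := n+1) (z := z) hz
      rw [hcntSn n z hz, Nat.card_of_isEmpty]

noncomputable def cntL (p : ℕ) : ℕ → ℤ → ℕ
  | 0, h => if h = 0 then 1 else 0
  | n+1, h => if 0 ≤ h then ∑ l ∈ Finset.Icc (-1:ℤ) (p:ℤ), cntL p n (h - l) else 0

noncomputable def cntT (p : ℕ) : ℕ → ℤ × ℤ → ℕ
  | 0, z => if z = 0 then 1 else 0
  | n+1, z => if 0 ≤ z.1 ∧ 0 ≤ z.2 then ∑ s ∈ Steps p, cntT p n (z - s) else 0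

noncomputable def box (p : ℕ) (n : ℕ) : Finset (ℤ × ℤ) :=
  Finset.Icc (0:ℤ) (n:ℤ) ×ˢ Finset.Icc (0:ℤ) ((p:ℤ) * (n:ℤ))

lemma mem_box {p n : ℕ} {z : ℤ × ℤ} :
    z ∈ box p n ↔ (0 ≤ z.1 ∧ z.1 ≤ (n:ℤ)) ∧ 0 ≤ z.2 ∧ z.2 ≤ (p:ℤ) * (n:ℤ) := by
  simp [box, Finset.mem_product, Finset.mem_Icc, and_assoc]

lemma steps_bound (p : ℕ) {s : ℤ × ℤ} (hs : s ∈ Steps p) :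
    s.1 ≤ 1 ∧ s.2 ≤ (p:ℤ) := by
  rcases Finset.mem_insert.mp hs with h | h
  · subst h
    refine ⟨le_refl 1, ?_⟩
    show (-1:ℤ) ≤ (p:ℤ)
    omega
  · obtain ⟨j, hj, rfl⟩ := Finset.mem_image.mp h
    simp only [Finset.mem_range] at hj
    constructor <;> [omega; omega]

lemma mu_supp (p : ℕ) {h : ℤ} {z : ℤ × ℤ} (hne : mu p h z ≠ 0) : 0 ≤ z.1 ∧ 0 ≤ z.2 := by
  by_contra hcon
  apply hne
  unfold mu
  rcases not_and_or.mp hcon with h1 | h2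
  · exact Finset.sum_eq_zero fun s _ => KZ_negu p (by omega) _
  · rw [Finset.Icc_eq_empty (by omega), Finset.sum_empty]

lemma cntT_supp (p : ℕ) : ∀ (n : ℕ) (z : ℤ × ℤ), cntT p n z ≠ 0 → z ∈ box p n := by
  intro n
  induction n with
  | zero =>
    intro z hz
    rw [cntT] at hz
    have : z = 0 := by by_contra hc; rw [if_neg hc] at hz; exact hz rfl
    subst this
    simp [mem_box]
  | succ n ih =>
    intro z hz
    rw [cntT] at hz
    have hQ : 0 ≤ z.1 ∧ 0 ≤ z.2 := by
      by_contra hc; rw [if_neg hc] at hz; exact hz rfl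
    rw [if_pos hQ] at hz
    obtain ⟨s, hs, hne⟩ := Finset.exists_ne_zero_of_sum_ne_zero hz
    have hb := ih _ hne
    rw [mem_box] at hb ⊢
    have := steps_bound p hs
    push_cast at hb ⊢
    constructor
    · constructor
      · exact hQ.1
      · have : z.1 - s.1 ≤ (n:ℤ) := by simpa using hb.1.2
        omega
    · constructor
      · exact hQ.2
      · have h2 : z.2 - s.2 ≤ (p:ℤ) * (n:ℤ) := by simpa using hb.2.2
        nlinarith [this.2]

lemma main_identity (p : ℕ) : ∀ (n : ℕ) (h : ℤ),
    (cntL p n h : ℤ) = ∑ z ∈ box p n, mu p h z * (cntT p n z : ℤ) := by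
  intro n
  induction n with
  | zero =>
    intro h
    have hbox : box p 0 = {((0:ℤ),(0:ℤ))} := by
      ext z
      simp only [mem_box, Finset.mem_singleton, Prod.ext_iff]
      constructor
      · rintro ⟨⟨a,b⟩,⟨c,d⟩⟩; push_cast at b d; constructor <;> omega
      · rintro ⟨h1, h2⟩; rw [h1, h2]; norm_num
    rw [hbox, Finset.sum_singleton]
    have hmu : mu p h ((0:ℤ),(0:ℤ)) = if h = 0 then 1 else 0 := by
      unfold mu
      rw [show Finset.Icc (0:ℤ) ((0:ℤ),(0:ℤ)).2 = {0} from rfl, Finset.sum_singleton]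
      rw [sub_zero]
      exact KZ_base p h
    have hT : cntT p 0 ((0:ℤ),(0:ℤ)) = 1 := by rw [cntT]; simp [Prod.ext_iff]
    rw [hmu, hT, cntL]
    push_cast
    split <;> simp
  | succ n ih =>
    intro h
    have hsub : ∀ z ∈ box p (n+1), mu p h z * (cntT p (n+1) z : ℤ)
        = ∑ s ∈ Steps p, mu p h z * (cntT p n (z - s) : ℤ) := by
      intro z hz
      rw [mem_box] at hz
      rw [show cntT p (n+1) z = ∑ s ∈ Steps p, cntT p n (z - s) from by
            rw [cntT, if_pos ⟨hz.1.1, hz.2.1⟩]]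
      push_cast
      rw [Finset.mul_sum]
    rw [Finset.sum_congr rfl hsub, Finset.sum_comm]
    have swap : ∀ s ∈ Steps p, (∑ z ∈ box p (n+1), mu p h z * (cntT p n (z - s) : ℤ))
        = ∑ y ∈ box p n, mu p h (y + s) * (cntT p n y : ℤ) := by
      intro s hs
      refine Finset.sum_bij_ne_zero (fun z _ _ => z - s) ?_ ?_ ?_ ?_
      · intro z hz hne
        apply cntT_supp
        intro hc
        apply hne
        rw [hc]
        push_cast
        ring
      · intro z1 h11 h12 z2 h21 h22 heq
        simpa using heq
      · intro y hy hgne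
        refine ⟨y + s, ?_, ?_, by simp⟩
        · have hmu_ne : mu p h (y + s) ≠ 0 := by
            intro hc; apply hgne; rw [hc]; ring
          have hQ := mu_supp p hmu_ne
          have hb := mem_box.mp hy
          have hsb := steps_bound p hs
          rw [mem_box]
          obtain ⟨⟨hb1, hb2⟩, hb3, hb4⟩ := hb
          simp only [Prod.fst_add, Prod.snd_add] at hQ ⊢
          push_cast
          have e : (p:ℤ)*((n:ℤ)+1) = (p:ℤ)*(n:ℤ) + (p:ℤ) := by ring
          rw [e]
          exact ⟨⟨hQ.1, by omega⟩, hQ.2, by omega⟩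
        · intro hc
          apply hgne
          rw [show y + s - s = y from by ring] at hc
          exact hc
      · intro z hz hne
        rw [show z - s + s = z from by ring]
    rw [Finset.sum_congr rfl swap, Finset.sum_comm]
    have hstep : ∀ y ∈ box p n, (∑ s ∈ Steps p, mu p h (y + s) * (cntT p n y : ℤ))
        = (if 0 ≤ h then ∑ l ∈ Finset.Icc (-1:ℤ) (p:ℤ), mu p (h - l) y else 0) * (cntT p n y : ℤ) := by
      intro y hy
      rw [← Finset.sum_mul]
      congr 1
      have hb := mem_box.mp hy
      exact star p h y.1 y.2 hb.1.1 hb.2.1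
    rw [Finset.sum_congr rfl hstep]
    by_cases hh : 0 ≤ h
    · simp only [if_pos hh]
      rw [cntL, if_pos hh]
      push_cast
      calc (∑ l ∈ Finset.Icc (-1:ℤ) (p:ℤ), (cntL p n (h - l) : ℤ))
          = ∑ l ∈ Finset.Icc (-1:ℤ) (p:ℤ), ∑ y ∈ box p n, mu p (h - l) y * (cntT p n y : ℤ) :=
            Finset.sum_congr rfl fun l _ => ih (h - l)
        _ = ∑ y ∈ box p n, ∑ l ∈ Finset.Icc (-1:ℤ) (p:ℤ), mu p (h - l) y * (cntT p n y : ℤ) :=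
            Finset.sum_comm
        _ = ∑ y ∈ box p n, (∑ l ∈ Finset.Icc (-1:ℤ) (p:ℤ), mu p (h - l) y) * (cntT p n y : ℤ) :=
            Finset.sum_congr rfl fun y _ => (Finset.sum_mul _ _ _).symm
    · simp only [if_neg hh]
      rw [cntL, if_neg hh]
      simp


lemma final_identity (p : ℕ) (n : ℕ) : cntL p n 0 = ∑ z ∈ box p n, cntT p n z := by
  have h := main_identity p n 0
  have e : ∀ z ∈ box p n, mu p 0 z * (cntT p n z : ℤ) = (cntT p n z : ℤ) := by
    intro z hz
    rw [mu_zeroh p (mem_box.mp hz).1.1 (mem_box.mp hz).2.1, one_mul]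
  rw [Finset.sum_congr rfl e] at h
  exact_mod_cast h

/-- prefix-sum conditions transfer to suffix-sum conditions on the reverse. -/
lemma rev_cond {M : Type*} [AddCommMonoid M] (w : List M) (C : Set M) :
    (∀ i, (w.take i).sum ∈ C) ↔ (∀ i, (w.reverse.drop i).sum ∈ C) := by
  constructor
  · intro h i
    rw [List.drop_reverse, List.sum_reverse]
    exact h _
  · intro h i
    by_cases hi : i ≤ w.length
    · have := h (w.length - i)
      rw [List.drop_reverse, List.sum_reverse,
        show w.length - (w.length - i) = i by omega] at this
      exact this
    · rw [List.take_of_length_le (by omega)]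
      have := h 0
      rwa [List.drop_zero, List.sum_reverse] at this

lemma mem_Steps_iff (p : ℕ) (s : ℤ × ℤ) : s ∈ Steps p ↔ InSp p s := by
  unfold Steps InSp
  simp only [Finset.mem_insert, Finset.mem_image, Finset.mem_range]
  constructor
  · rintro (h | ⟨j, hj, rfl⟩)
    · exact Or.inl h
    · exact Or.inr ⟨j, by omega, rfl⟩
  · rintro (h | ⟨j, hj, rfl⟩)
    · exact Or.inl h
    · exact Or.inr ⟨j, by omega, rfl⟩

lemma sum_bounds (p : ℕ) : ∀ (w : List (ℤ × ℤ)), (∀ a ∈ w, a ∈ Steps p) →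
    w.sum.1 ≤ (w.length : ℤ) ∧ w.sum.2 ≤ (p:ℤ) * (w.length : ℤ) := by
  intro w
  induction w with
  | nil => intro _; simp
  | cons a t ih =>
    intro hmem
    have ha := steps_bound p (hmem a List.mem_cons_self)
    have ht := ih (fun b hb => hmem b (List.mem_cons_of_mem a hb))
    rw [List.sum_cons, List.length_cons]
    simp only [Prod.fst_add, Prod.snd_add]
    push_cast
    constructor
    · omega
    · have e : (p:ℤ) * ((t.length : ℤ) + 1) = (p:ℤ) * (t.length : ℤ) + (p:ℤ) := by ring
      rw [e]
      omega

def Qset : Set (ℤ × ℤ) := {z : ℤ × ℤ | 0 ≤ z.1 ∧ 0 ≤ z.2}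

/-- reversal equivalence for Łukasiewicz words. -/
def lukEquiv (p n : ℕ) :
    {w : List ℤ // w.length = n ∧ Lukasiewicz p w}
      ≃ GW (Finset.Icc (-1:ℤ) (p:ℤ)) {x : ℤ | 0 ≤ x} n 0 where
  toFun x := ⟨x.1.reverse, by
    obtain ⟨hlen, hS, htake, hsum⟩ := x.2
    refine ⟨by simpa using hlen, ?_, (rev_cond x.1 _).mp htake, by
      rw [List.sum_reverse]; exact hsum⟩
    intro a ha
    rw [List.mem_reverse] at ha
    simpa [Finset.mem_Icc] using hS a ha⟩
  invFun y := ⟨y.1.reverse, by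
    obtain ⟨hlen, hF, hdrop, hsum⟩ := y.2
    refine ⟨by simpa using hlen, ?_, ?_, by rw [List.sum_reverse]; exact hsum⟩
    · intro a ha
      rw [List.mem_reverse] at ha
      simpa [Finset.mem_Icc] using hF a ha
    · apply (rev_cond y.1.reverse {x : ℤ | 0 ≤ x}).mpr
      intro i
      rw [List.reverse_reverse]
      exact hdrop i⟩
  left_inv x := Subtype.ext (List.reverse_reverse x.1)
  right_inv y := Subtype.ext (List.reverse_reverse y.1)

lemma tandem_steps {p n : ℕ} (x : {w : List (ℤ × ℤ) // w.length = n ∧ Tandem p w}) :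
    ∀ a ∈ x.1, a ∈ Steps p := fun a ha => (mem_Steps_iff p a).mpr (x.2.2.1 a ha)

lemma tandem_sum_box {p n : ℕ} (x : {w : List (ℤ × ℤ) // w.length = n ∧ Tandem p w}) :
    x.1.sum ∈ box p n := by
  have hsteps := tandem_steps x
  have hbounds := sum_bounds p x.1 hsteps
  have hQ := x.2.2.2 x.1.length
  rw [List.take_length] at hQ
  rw [x.2.1] at hbounds
  rw [mem_box]
  exact ⟨⟨hQ.1, hbounds.1⟩, hQ.2, hbounds.2⟩

/-- forward map for tandem words. -/
def tandemFwd (p n : ℕ) (x : {w : List (ℤ × ℤ) // w.length = n ∧ Tandem p w}) :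
    (Σ z : {z // z ∈ box p n}, GW (Steps p) Qset n z.1) :=
  ⟨⟨x.1.sum, tandem_sum_box x⟩, ⟨x.1.reverse, by
    obtain ⟨hlen, hmem, htake⟩ := x.2
    refine ⟨by simpa using hlen, ?_, (rev_cond x.1 Qset).mp htake, by rw [List.sum_reverse]⟩
    intro a ha
    rw [List.mem_reverse] at ha
    exact tandem_steps x a ha⟩⟩

/-- reversal equivalence for tandem words, fibered over the endpoint. -/
noncomputable def tandemEquiv (p n : ℕ) :
    {w : List (ℤ × ℤ) // w.length = n ∧ Tandem p w}
      ≃ (Σ z : {z // z ∈ box p n}, GW (Steps p) Qset n z.1) := by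
  apply Equiv.ofBijective (tandemFwd p n)
  constructor
  · rintro ⟨w1, hw1⟩ ⟨w2, hw2⟩ heq
    have := congrArg (fun t : (Σ z : {z // z ∈ box p n}, GW (Steps p) Qset n z.1) => t.2.1) heq
    simp only [tandemFwd] at this
    apply Subtype.ext
    exact List.reverse_injective this
  · rintro ⟨⟨z, hzb⟩, ⟨v, hvlen, hvF, hvdrop, hvsum⟩⟩
    have htandem : Tandem p v.reverse := by
      constructor
      · intro a ha
        rw [List.mem_reverse] at ha
        exact (mem_Steps_iff p a).mp (hvF a ha)
      · intro i
        have h2 : ∀ i, (v.reverse.take i).sum ∈ Qset := by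
          apply (rev_cond v.reverse Qset).mpr
          intro i
          rw [List.reverse_reverse]
          exact hvdrop i
        exact h2 i
    refine ⟨⟨v.reverse, by simpa using hvlen, htandem⟩, ?_⟩
    have hz : v.reverse.sum = z := by rw [List.sum_reverse]; exact hvsum
    refine Sigma.ext (Subtype.ext ?_) ?_
    · exact hz
    · refine (Subtype.heq_iff_coe_eq ?_).mpr ?_
      · intro l
        simp only [tandemFwd]
        rw [hz]
      · exact List.reverse_reverse v

theorem main_result (p : ℕ) (n : ℕ) :
    Nat.card {w : List ℤ // w.length = n ∧ Lukasiewicz p w} =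
      Nat.card {w : List (ℤ × ℤ) // w.length = n ∧ Tandem p w} := by
  have hL : Nat.card {w : List ℤ // w.length = n ∧ Lukasiewicz p w} = cntL p n 0 := by
    rw [Nat.card_congr (lukEquiv p n)]
    apply GW_card (Finset.Icc (-1:ℤ) (p:ℤ)) {x : ℤ | 0 ≤ x} (by simp) (cntL p)
    · rfl
    · intro z hz; rw [cntL]; exact if_neg hz
    · intro m z hz; rw [cntL]; exact if_pos (show (0:ℤ) ≤ z from hz)
    · intro m z hz; rw [cntL]; exact if_neg (show ¬ (0:ℤ) ≤ z from hz)
  have hT : Nat.card {w : List (ℤ × ℤ) // w.length = n ∧ Tandem p w}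
      = ∑ z ∈ box p n, cntT p n z := by
    rw [Nat.card_congr (tandemEquiv p n)]
    haveI : ∀ z : {z // z ∈ box p n}, Finite (GW (Steps p) Qset n z.1) :=
      fun z => GW_finite _ _ n _
    haveI : ∀ z : {z // z ∈ box p n}, Fintype (GW (Steps p) Qset n z.1) :=
      fun z => Fintype.ofFinite _
    rw [Nat.card_eq_fintype_card, Fintype.card_sigma]
    rw [← Finset.sum_coe_sort (box p n) (fun z => cntT p n z)]
    apply Finset.sum_congr rfl
    intro z _
    rw [← Nat.card_eq_fintype_card]
    apply GW_card (Steps p) Qset ⟨le_refl 0, le_refl 0⟩ (cntT p)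
    · rfl
    · intro z hz; rw [cntT]; exact if_neg hz
    · intro m z hz; rw [cntT]; exact if_pos (show 0 ≤ z.1 ∧ 0 ≤ z.2 from hz)
    · intro m z hz; rw [cntT]; exact if_neg (show ¬ (0 ≤ z.1 ∧ 0 ≤ z.2) from hz)
  rw [hL, hT, final_identity]


end LukTandem

theorem lukasiewicz_card_eq_tandem_card (p : ℕ) (hp : 1 ≤ p) (n : ℕ) :
    Nat.card {w : List ℤ // w.length = n ∧ Lukasiewicz p w} =
      Nat.card {w : List (ℤ × ℤ) // w.length = n ∧ Tandem p w} :=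
  LukTandem.main_result p n
end

section
/- For every natural number n, the number of quarter-plane words of length n over S_{1,sym} equals 2^n times the number of quarter-plane words of length n over S_1. -/
def Q (p : ℤ × ℤ) : Prop := 0 ≤ p.1 ∧ 0 ≤ p.2

instance (p : ℤ × ℤ) : Decidable (Q p) := by unfold Q; infer_instance

def F1 : Finset (ℤ × ℤ) := {(0, 1), (-1, 0), (1, -1)}
def F2 : Finset (ℤ × ℤ) := {(0, -1), (1, 0), (-1, 1)}

def c : List (Finset (ℤ × ℤ)) → ℤ × ℤ → ℕ
  | [], p => if Q p then 1 else 0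
  | S :: L, p => if Q p then (∑ s ∈ S, c L (p + s)) else 0

lemma c_vanish (L : List (Finset (ℤ × ℤ))) (p : ℤ × ℤ) (h : ¬ Q p) : c L p = 0 := by
  cases L <;> simp [c, h]

lemma expandF1 (L : List (Finset (ℤ × ℤ))) (x y : ℤ) :
    c (F1 :: L) (x, y) =
      if Q (x, y) then c L (x, y + 1) + c L (x - 1, y) + c L (x + 1, y - 1) else 0 := by
  have h1 : ((x, y) + (0, 1) : ℤ × ℤ) = (x, y + 1) := by simp [Prod.ext_iff]
  have h2 : ((x, y) + (-1, 0) : ℤ × ℤ) = (x - 1, y) := by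
    simp [Prod.ext_iff]; ring
  have h3 : ((x, y) + (1, -1) : ℤ × ℤ) = (x + 1, y - 1) := by
    simp [Prod.ext_iff]; constructor <;> ring
  simp only [c, F1]
  rw [Finset.sum_insert (by decide), Finset.sum_insert (by decide), Finset.sum_singleton,
    h1, h2, h3, add_assoc]

lemma expandF2 (L : List (Finset (ℤ × ℤ))) (x y : ℤ) :
    c (F2 :: L) (x, y) =
      if Q (x, y) then c L (x, y - 1) + c L (x + 1, y) + c L (x - 1, y + 1) else 0 := by
  have h1 : ((x, y) + (0, -1) : ℤ × ℤ) = (x, y - 1) := by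
    simp [Prod.ext_iff]; ring
  have h2 : ((x, y) + (1, 0) : ℤ × ℤ) = (x + 1, y) := by simp [Prod.ext_iff]
  have h3 : ((x, y) + (-1, 1) : ℤ × ℤ) = (x - 1, y + 1) := by
    simp [Prod.ext_iff]; ring
  simp only [c, F2]
  rw [Finset.sum_insert (by decide), Finset.sum_insert (by decide), Finset.sum_singleton,
    h1, h2, h3, add_assoc]

lemma Q_mk (x y : ℤ) : Q (x, y) ↔ 0 ≤ x ∧ 0 ≤ y := Iff.rfl

lemma key (f : ℤ × ℤ → ℕ) (hf : ∀ q, ¬ Q q → f q = 0) (x y : ℤ)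
    (hx : 0 ≤ x) (hy : 0 ≤ y) :
    ((if Q (x, y + 1) then f (x, y) + f (x + 1, y + 1) + f (x - 1, y + 2) else 0)
      + (if Q (x - 1, y) then f (x - 1, y - 1) + f (x, y) + f (x - 2, y + 1) else 0))
      + (if Q (x + 1, y - 1) then f (x + 1, y - 2) + f (x + 2, y - 1) + f (x, y) else 0)
    = ((if Q (x, y - 1) then f (x, y) + f (x - 1, y - 1) + f (x + 1, y - 2) else 0)
      + (if Q (x + 1, y) then f (x + 1, y + 1) + f (x, y) + f (x + 2, y - 1) else 0))
      + (if Q (x - 1, y + 1) then f (x - 1, y + 2) + f (x - 2, y + 1) + f (x, y) else 0) := by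
  rw [if_pos (show Q (x, y + 1) from ⟨hx, by omega⟩),
      if_pos (show Q (x + 1, y) from ⟨by omega, hy⟩)]
  rcases le_or_gt 1 x with hx1 | hx1 <;> rcases le_or_gt 1 y with hy1 | hy1
  · rw [if_pos (show Q (x - 1, y) from ⟨by omega, hy⟩),
        if_pos (show Q (x + 1, y - 1) from ⟨by omega, by omega⟩),
        if_pos (show Q (x, y - 1) from ⟨hx, by omega⟩),
        if_pos (show Q (x - 1, y + 1) from ⟨by omega, by omega⟩)]
    ring
  · -- y = 0
    rw [if_pos (show Q (x - 1, y) from ⟨by omega, hy⟩),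
        if_neg (show ¬ Q (x + 1, y - 1) from fun h => by have := h.2; simp at this; omega),
        if_neg (show ¬ Q (x, y - 1) from fun h => by have := h.2; simp at this; omega),
        if_pos (show Q (x - 1, y + 1) from ⟨by omega, by omega⟩),
        hf (x - 1, y - 1) (fun h => by have := h.2; simp at this; omega),
        hf (x + 2, y - 1) (fun h => by have := h.2; simp at this; omega)]
    ring
  · -- x = 0
    rw [if_neg (show ¬ Q (x - 1, y) from fun h => by have := h.1; simp at this; omega),
        if_pos (show Q (x + 1, y - 1) from ⟨by omega, by omega⟩),
        if_pos (show Q (x, y - 1) from ⟨hx, by omega⟩),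
        if_neg (show ¬ Q (x - 1, y + 1) from fun h => by have := h.1; simp at this; omega),
        hf (x - 1, y + 2) (fun h => by have := h.1; simp at this; omega),
        hf (x - 1, y - 1) (fun h => by have := h.1; simp at this; omega)]
    ring
  · -- x = y = 0
    rw [if_neg (show ¬ Q (x - 1, y) from fun h => by have := h.1; simp at this; omega),
        if_neg (show ¬ Q (x + 1, y - 1) from fun h => by have := h.2; simp at this; omega),
        if_neg (show ¬ Q (x, y - 1) from fun h => by have := h.2; simp at this; omega),
        if_neg (show ¬ Q (x - 1, y + 1) from fun h => by have := h.1; simp at this; omega),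
        hf (x - 1, y + 2) (fun h => by have := h.1; simp at this; omega),
        hf (x + 2, y - 1) (fun h => by have := h.2; simp at this; omega)]
    ring

lemma arith1 (a : ℤ) : a + 1 - 1 = a := by ring
lemma arith2 (a : ℤ) : a - 1 + 1 = a := by ring
lemma arith3 (a : ℤ) : a + 1 + 1 = a + 2 := by ring
lemma arith4 (a : ℤ) : a - 1 - 1 = a - 2 := by ring

/-- The two tilted transfer operators commute. -/
lemma swap_lemma (L : List (Finset (ℤ × ℤ))) (p : ℤ × ℤ) :
    c (F1 :: F2 :: L) p = c (F2 :: F1 :: L) p := by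
  obtain ⟨x, y⟩ := p
  by_cases hq : Q (x, y)
  · rw [expandF1 (F2 :: L) x y, expandF2 (F1 :: L) x y, if_pos hq, if_pos hq,
      expandF2 L x (y + 1), expandF2 L (x - 1) y, expandF2 L (x + 1) (y - 1),
      expandF1 L x (y - 1), expandF1 L (x + 1) y, expandF1 L (x - 1) (y + 1)]
    simp only [arith1, arith2, arith3, arith4]
    exact key (c L) (fun q h => c_vanish L q h) x y hq.1 hq.2
  · rw [c_vanish _ _ hq, c_vanish _ _ hq]

/-- Base: one step of `F2` counts the same as one step of `F1`. -/
lemma base_lemma (p : ℤ × ℤ) : c [F2] p = c [F1] p := by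
  obtain ⟨x, y⟩ := p
  rw [expandF1, expandF2]
  by_cases hq : Q (x, y)
  · rw [if_pos hq, if_pos hq]
    obtain ⟨hx, hy⟩ := hq
    simp only [c]
    rcases le_or_gt 1 x with hx1 | hx1 <;> rcases le_or_gt 1 y with hy1 | hy1 <;>
      · rw [if_pos (show Q (x, y + 1) from ⟨hx, by omega⟩),
          if_pos (show Q (x + 1, y) from ⟨by omega, hy⟩)]
        by_cases h1 : Q (x - 1, y)
        · have h1' : Q (x - 1, y + 1) := ⟨h1.1, by omega⟩
          rw [if_pos h1, if_pos h1']
          by_cases h2 : Q (x, y - 1)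
          · rw [if_pos h2, if_pos (show Q (x + 1, y - 1) from ⟨by omega, h2.2⟩)]
          · rw [if_neg h2, if_neg (show ¬ Q (x + 1, y - 1) from fun h => h2 ⟨hx, h.2⟩)]
        · have h1' : ¬ Q (x - 1, y + 1) := fun h => h1 ⟨h.1, hy⟩
          rw [if_neg h1, if_neg h1']
          by_cases h2 : Q (x, y - 1)
          · rw [if_pos h2, if_pos (show Q (x + 1, y - 1) from ⟨by omega, h2.2⟩)]
          · rw [if_neg h2, if_neg (show ¬ Q (x + 1, y - 1) from fun h => h2 ⟨hx, h.2⟩)]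
  · rw [if_neg hq, if_neg hq]

/-- Lemma A: prepending an `F2` step to `k` `F1` steps counts like `k+1` `F1` steps. -/
lemma lemA : ∀ (k : ℕ) (p : ℤ × ℤ),
    c (F2 :: List.replicate k F1) p = c (List.replicate (k + 1) F1) p := by
  intro k
  induction k with
  | zero => intro p; simpa using base_lemma p
  | succ k ih =>
      intro p
      have h1 : List.replicate (k + 1) F1 = F1 :: List.replicate k F1 := rfl
      rw [h1, ← swap_lemma]
      show c (F1 :: F2 :: List.replicate k F1) p = _
      obtain ⟨x, y⟩ := p
      have h2 : List.replicate (k + 1 + 1) F1 = F1 :: List.replicate (k + 1) F1 := rfl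
      rw [h2, expandF1, expandF1]
      by_cases hq : Q (x, y)
      · rw [if_pos hq, if_pos hq, ih, ih, ih]
      · rw [if_neg hq, if_neg hq]

lemma expandUnion (L : List (Finset (ℤ × ℤ))) (p : ℤ × ℤ) :
    c ((F1 ∪ F2) :: L) p = c (F1 :: L) p + c (F2 :: L) p := by
  simp only [c]
  rw [Finset.sum_union (by decide)]
  by_cases hq : Q p
  · rw [if_pos hq, if_pos hq, if_pos hq]
  · rw [if_neg hq, if_neg hq, if_neg hq]

/-- Main counting identity. -/
lemma main_identity : ∀ (n : ℕ) (p : ℤ × ℤ),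
    c (List.replicate n (F1 ∪ F2)) p = 2 ^ n * c (List.replicate n F1) p := by
  intro n
  induction n with
  | zero => intro p; simp
  | succ n ih =>
      intro p
      have h1 : List.replicate (n + 1) (F1 ∪ F2) = (F1 ∪ F2) :: List.replicate n (F1 ∪ F2) := rfl
      rw [h1, expandUnion]
      have key2 : ∀ (S : Finset (ℤ × ℤ)),
          c (S :: List.replicate n (F1 ∪ F2)) p = 2 ^ n * c (S :: List.replicate n F1) p := by
        intro S
        simp only [c]
        by_cases hq : Q p
        · rw [if_pos hq, if_pos hq, Finset.mul_sum]
          exact Finset.sum_congr rfl fun s _ => ih (p + s)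
        · rw [if_neg hq, if_neg hq, mul_zero]
      rw [key2 F1, key2 F2, lemA n p]
      have h2 : List.replicate (n + 1) F1 = F1 :: List.replicate n F1 := rfl
      rw [← h2]
      ring

/-- The finite set of quarter-plane words of length `n` over step set `S`, starting at `p`. -/
def WS (S : Finset (ℤ × ℤ)) : ℕ → ℤ × ℤ → Finset (List (ℤ × ℤ))
  | 0, p => if Q p then {[]} else ∅
  | n + 1, p => if Q p then S.biUnion (fun s => (WS S n (p + s)).image (s :: ·)) else ∅

lemma mem_WS (S : Finset (ℤ × ℤ)) : ∀ (n : ℕ) (p : ℤ × ℤ) (w : List (ℤ × ℤ)),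
    w ∈ WS S n p ↔
      w.length = n ∧ (∀ a ∈ w, a ∈ S) ∧ ∀ i, Q (p + (w.take i).sum) := by
  intro n
  induction n with
  | zero =>
      intro p w
      constructor
      · intro hw
        by_cases hq : Q p
        · rw [WS, if_pos hq] at hw
          simp only [Finset.mem_singleton] at hw
          subst hw
          exact ⟨rfl, by simp, fun i => by simpa using hq⟩
        · rw [WS, if_neg hq] at hw; exact absurd hw (Finset.notMem_empty _)
      · rintro ⟨hlen, -, hpre⟩
        have hw : w = [] := List.length_eq_zero_iff.mp hlen
        subst hw
        have hq : Q p := by simpa using hpre 0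
        rw [WS, if_pos hq]
        simp
  | succ n ih =>
      intro p w
      constructor
      · intro hw
        by_cases hq : Q p
        · rw [WS, if_pos hq] at hw
          simp only [Finset.mem_biUnion, Finset.mem_image] at hw
          obtain ⟨s, hs, w', hw', rfl⟩ := hw
          obtain ⟨hlen, hmem, hpre⟩ := (ih (p + s) w').mp hw'
          refine ⟨by simp [hlen], ?_, ?_⟩
          · intro a ha
            rcases List.mem_cons.mp ha with rfl | ha
            · exact hs
            · exact hmem a ha
          · intro i
            cases i with
            | zero => simpa using hq
            | succ i =>
                have : ((s :: w').take (i + 1)).sum = s + (w'.take i).sum := by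
                  simp [List.take_succ_cons]
                rw [this, ← add_assoc]
                exact hpre i
        · rw [WS, if_neg hq] at hw; exact absurd hw (Finset.notMem_empty _)
      · rintro ⟨hlen, hmem, hpre⟩
        have hq : Q p := by simpa using hpre 0
        cases w with
        | nil => simp at hlen
        | cons s w' =>
            rw [WS, if_pos hq]
            simp only [Finset.mem_biUnion, Finset.mem_image]
            refine ⟨s, hmem s (by simp), w', ?_, rfl⟩
            refine (ih (p + s) w').mpr ⟨by simpa using hlen, fun a ha => hmem a (by simp [ha]), ?_⟩
            intro i
            have := hpre (i + 1)
            have h2 : ((s :: w').take (i + 1)).sum = s + (w'.take i).sum := by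
              simp [List.take_succ_cons]
            rw [h2, ← add_assoc] at this
            exact this

lemma card_WS (S : Finset (ℤ × ℤ)) : ∀ (n : ℕ) (p : ℤ × ℤ),
    (WS S n p).card = c (List.replicate n S) p := by
  intro n
  induction n with
  | zero =>
      intro p
      by_cases hq : Q p <;> simp [WS, c, hq]
  | succ n ih =>
      intro p
      have h1 : List.replicate (n + 1) S = S :: List.replicate n S := rfl
      rw [h1]
      by_cases hq : Q p
      · rw [WS, if_pos hq]
        show _ = c (S :: List.replicate n S) p
        simp only [c]
        rw [if_pos hq]
        rw [Finset.card_biUnion]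
        · refine Finset.sum_congr rfl fun s _ => ?_
          rw [Finset.card_image_of_injective _ (fun a b h => by injection h), ih]
        · intro a _ b _ hab
          simp only [Finset.disjoint_left, Finset.mem_image]
          rintro w ⟨u, -, rfl⟩ ⟨v, -, hv⟩
          exact hab (by injection hv with h1 _; exact h1.symm)
      · rw [WS, if_neg hq]
        show _ = c (S :: List.replicate n S) p
        simp [c, hq]

/-- The step set `S_1` (tandem steps): north, west, south-east. -/
def S1 : Set (ℤ × ℤ) := {(0, 1), (-1, 0), (1, -1)}

/-- The symmetrized step set `S_{1,sym}`. -/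
def S1sym : Set (ℤ × ℤ) := {(0, 1), (-1, 0), (1, -1), (0, -1), (1, 0), (-1, 1)}

/-- A quarter-plane word over a step set `S`: every letter is in `S` and every
prefix sum has both coordinates nonnegative. -/
def QPword (S : Set (ℤ × ℤ)) (w : List (ℤ × ℤ)) : Prop :=
  (∀ a ∈ w, a ∈ S) ∧ ∀ i, 0 ≤ ((w.take i).sum).1 ∧ 0 ≤ ((w.take i).sum).2

lemma mem_S1_iff (a : ℤ × ℤ) : a ∈ S1 ↔ a ∈ F1 := by
  simp [S1, F1]

lemma mem_S1sym_iff (a : ℤ × ℤ) : a ∈ S1sym ↔ a ∈ F1 ∪ F2 := by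
  simp [S1sym, F1, F2, or_assoc]
  tauto

lemma word_iff (S : Set (ℤ × ℤ)) (F : Finset (ℤ × ℤ)) (hSF : ∀ a, a ∈ S ↔ a ∈ F)
    (n : ℕ) (w : List (ℤ × ℤ)) :
    (w.length = n ∧ QPword S w) ↔ w ∈ WS F n 0 := by
  rw [mem_WS]
  constructor
  · rintro ⟨hlen, hmem, hpre⟩
    exact ⟨hlen, fun a ha => (hSF a).mp (hmem a ha), fun i => by
      rw [zero_add]; exact hpre i⟩
  · rintro ⟨hlen, hmem, hpre⟩
    refine ⟨hlen, fun a ha => (hSF a).mpr (hmem a ha), fun i => ?_⟩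
    have := hpre i
    rwa [zero_add] at this

theorem card_qp_sym_eq_two_pow_mul_card_qp (n : ℕ) :
    Nat.card {w : List (ℤ × ℤ) // w.length = n ∧ QPword S1sym w} =
      2 ^ n * Nat.card {w : List (ℤ × ℤ) // w.length = n ∧ QPword S1 w} := by
  have hsym : Nat.card {w : List (ℤ × ℤ) // w.length = n ∧ QPword S1sym w}
      = (WS (F1 ∪ F2) n 0).card := by
    rw [← Nat.card_eq_finsetCard]
    exact Nat.card_congr (Equiv.subtypeEquivRight (word_iff S1sym (F1 ∪ F2) mem_S1sym_iff n))
  have htan : Nat.card {w : List (ℤ × ℤ) // w.length = n ∧ QPword S1 w}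
      = (WS F1 n 0).card := by
    rw [← Nat.card_eq_finsetCard]
    exact Nat.card_congr (Equiv.subtypeEquivRight (word_iff S1 F1 mem_S1_iff n))
  rw [hsym, htan, card_WS, card_WS, main_identity]
end

section
/- For every natural number n, the number of bicoloured Motzkin words of length n equals the number of quarter-plane words of length n over S_{1,sym}. -/
/-- A bicoloured Motzkin word: a word over `{-1, 0, 1} × {solid, striped}`
(colours encoded by `Bool`) whose projection to the first coordinates has all
prefix sums nonnegative and total sum `0`. -/
def BicolMotzkin (w : List (ℤ × Bool)) : Prop :=
  (∀ a ∈ w, a.1 = -1 ∨ a.1 = 0 ∨ a.1 = 1) ∧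
    (∀ i, 0 ≤ ((w.map Prod.fst).take i).sum) ∧ (w.map Prod.fst).sum = 0

namespace CardQP

open Finset
open scoped Classical

noncomputable section

/-- The weight function intertwining the quarter-plane transfer operator with the
Motzkin transfer operator. -/
def c (h : ℤ) (p : ℤ × ℤ) : ℕ := (1 + min p.1 h + min 0 (p.2 - h)).toNat

lemma c_zero {p : ℤ × ℤ} (h1 : 0 ≤ p.1) (h2 : 0 ≤ p.2) : c 0 p = 1 := by
  simp only [c]; omega

lemma c_neg {p : ℤ × ℤ} {h : ℤ} (hh : h < 0) (h1 : 0 ≤ p.1) : c h p = 0 := by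
  simp only [c]; omega

lemma c_pos {p : ℤ × ℤ} {h : ℤ} (hc : 0 < c h p) : 0 ≤ p.1 ∧ 0 ≤ p.2 := by
  simp only [c] at hc; omega

lemma c_le {p : ℤ × ℤ} {h : ℤ} {n : ℕ} (hp : p.1 ≤ (n : ℤ)) : c h p ≤ n + 1 := by
  simp only [c]; omega

set_option maxHeartbeats 1000000 in
lemma tripleA (x y h : ℤ) (hx : 0 ≤ x) (hy : 0 ≤ y) (hh : 0 ≤ h) :
    c h (x-1,y) + c h (x,y+1) + c h (x+1,y-1)
      = c (h-1) (x,y) + c h (x,y) + c (h+1) (x,y) := by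
  simp only [c]; omega

set_option maxHeartbeats 1000000 in
lemma tripleB (x y h : ℤ) (hx : 0 ≤ x) (hy : 0 ≤ y) (hh : 0 ≤ h) :
    c h (x+1,y) + c h (x,y-1) + c h (x-1,y+1)
      = c (h-1) (x,y) + c h (x,y) + c (h+1) (x,y) := by
  simp only [c]; omega

/-- The six steps, as a `Finset`. -/
def A6 : Finset (ℤ × ℤ) := {(0, 1), (-1, 0), (1, -1), (0, -1), (1, 0), (-1, 1)}

/-- The Motzkin alphabet, as a `Finset`. -/
def AM : Finset (ℤ × Bool) :=
  {(-1, true), (-1, false), (0, true), (0, false), (1, true), (1, false)}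

/-- All words of length `n` over the alphabet `A`. -/
def lists {α : Type*} (A : Finset α) : ℕ → Finset (List α)
  | 0 => {[]}
  | n+1 => ((lists A n) ×ˢ A).image fun x => x.1 ++ [x.2]

lemma mem_lists {α : Type*} (A : Finset α) :
    ∀ (n : ℕ) (w : List α), w ∈ lists A n ↔ (w.length = n ∧ ∀ a ∈ w, a ∈ A) := by
  intro n
  induction n with
  | zero =>
      intro w
      constructor
      · intro hw
        simp only [lists, Finset.mem_singleton] at hw
        subst hw; simp
      · rintro ⟨hlen, -⟩
        simp only [lists, Finset.mem_singleton]
        exact List.length_eq_zero_iff.1 hlen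
  | succ n ih =>
      intro w
      simp only [lists, Finset.mem_image, Finset.mem_product]
      constructor
      · rintro ⟨⟨u, a⟩, ⟨hu, ha⟩, rfl⟩
        obtain ⟨h1, h2⟩ := (ih u).1 hu
        refine ⟨by simp [h1], ?_⟩
        intro b hb
        rcases List.mem_append.1 hb with h | h
        · exact h2 _ h
        · simp only [List.mem_singleton] at h; subst h; exact ha
      · rintro ⟨hlen, hmem⟩
        rcases List.eq_nil_or_concat w with rfl | ⟨u, a, rfl⟩
        · simp at hlen
        · rw [List.concat_eq_append] at *
          refine ⟨(u, a), ⟨(ih u).2 ⟨?_, ?_⟩, hmem a (by simp)⟩, rfl⟩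
          · simp only [List.length_append, List.length_singleton] at hlen; omega
          · intro b hb; exact hmem b (by simp [hb])

/-- Prefix-condition lemma: appending a letter. -/
lemma forall_take_append {M : Type*} [AddCommMonoid M] (P : M → Prop) (l : List M) (x : M) :
    (∀ i, P ((l ++ [x]).take i).sum) ↔ (∀ i, P ((l.take i).sum)) ∧ P (l.sum + x) := by
  constructor
  · intro H
    constructor
    · intro i
      rcases le_or_gt i l.length with hi | hi
      · have := H i; rwa [List.take_append_of_le_length hi] at this
      · have := H l.length
        rw [List.take_append_of_le_length le_rfl, List.take_length] at this
        rwa [List.take_of_length_le (le_of_lt hi)]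
    · have := H (l.length + 1)
      rw [List.take_of_length_le (by simp)] at this
      simpa using this
  · rintro ⟨H1, H2⟩ i
    rcases le_or_gt i l.length with hi | hi
    · rw [List.take_append_of_le_length hi]; exact H1 i
    · rw [List.take_of_length_le (by simp; omega)]
      simpa using H2

/-- Quarter-plane words of length `n`, as a `Finset`. -/
def QPF (n : ℕ) : Finset (List (ℤ × ℤ)) :=
  (lists A6 n).filter fun w => ∀ i, 0 ≤ ((w.take i).sum).1 ∧ 0 ≤ ((w.take i).sum).2

/-- Bicoloured Motzkin prefixes of length `n` with total height `h`. -/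
def MF (n : ℕ) (h : ℤ) : Finset (List (ℤ × Bool)) :=
  (lists AM n).filter fun w =>
    (∀ i, 0 ≤ ((w.map Prod.fst).take i).sum) ∧ (w.map Prod.fst).sum = h

/-- Quarter-plane words weighted by `c h` (as pairs with a counter). -/
def TF (n : ℕ) (h : ℤ) : Finset (List (ℤ × ℤ) × ℕ) :=
  ((QPF n) ×ˢ Finset.range (n+1)).filter fun x => x.2 < c h x.1.sum

lemma mem_QPF {n : ℕ} {w : List (ℤ × ℤ)} :
    w ∈ QPF n ↔ (w.length = n ∧ (∀ a ∈ w, a ∈ A6) ∧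
      ∀ i, 0 ≤ ((w.take i).sum).1 ∧ 0 ≤ ((w.take i).sum).2) := by
  simp only [QPF, Finset.mem_filter, mem_lists]
  tauto

lemma mem_MF {n : ℕ} {h : ℤ} {w : List (ℤ × Bool)} :
    w ∈ MF n h ↔ (w.length = n ∧ (∀ a ∈ w, a ∈ AM) ∧
      (∀ i, 0 ≤ ((w.map Prod.fst).take i).sum) ∧ (w.map Prod.fst).sum = h) := by
  simp only [MF, Finset.mem_filter, mem_lists]
  tauto

lemma QPF_sum_nonneg {n : ℕ} {w : List (ℤ × ℤ)} (hw : w ∈ QPF n) :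
    0 ≤ (w.sum).1 ∧ 0 ≤ (w.sum).2 := by
  have := (mem_QPF.1 hw).2.2 w.length
  rwa [List.take_length] at this

lemma mem_A6_fst_le {a : ℤ × ℤ} (ha : a ∈ A6) : a.1 ≤ 1 := by
  fin_cases ha <;> norm_num

lemma sum_fst_le_length : ∀ (w : List (ℤ × ℤ)), (∀ a ∈ w, a ∈ A6) → (w.sum).1 ≤ (w.length : ℤ)
  | [], _ => by simp
  | a :: l, hmem => by
      have h1 : a.1 ≤ 1 := mem_A6_fst_le (hmem a (by simp))
      have h2 : (l.sum).1 ≤ (l.length : ℤ) :=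
        sum_fst_le_length l (fun b hb => hmem b (by simp [hb]))
      simp only [List.sum_cons, List.length_cons, Prod.fst_add]
      push_cast
      omega

lemma QPF_sum_fst_le {n : ℕ} {w : List (ℤ × ℤ)} (hw : w ∈ QPF n) : (w.sum).1 ≤ (n : ℤ) := by
  obtain ⟨hlen, hmem, -⟩ := mem_QPF.1 hw
  exact hlen ▸ sum_fst_le_length w hmem

lemma MF_sum_nonneg {n : ℕ} {h : ℤ} {w : List (ℤ × Bool)} (hw : w ∈ MF n h) : 0 ≤ h := by
  obtain ⟨-, -, hpre, hsum⟩ := mem_MF.1 hw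
  have := hpre (w.map Prod.fst).length
  rwa [List.take_length, hsum] at this

lemma MF_neg {n : ℕ} {h : ℤ} (hh : h < 0) : MF n h = ∅ :=
  Finset.eq_empty_of_forall_notMem fun w hw => absurd (MF_sum_nonneg hw) (not_le.2 hh)

lemma sum_ite_lt {k R : ℕ} (hk : k ≤ R) :
    (∑ i ∈ Finset.range R, if i < k then 1 else 0) = k := by
  rw [← Finset.card_filter]
  have : (Finset.range R).filter (fun i => i < k) = Finset.range k := by
    ext i; simp only [Finset.mem_filter, Finset.mem_range]; omega
  rw [this, Finset.card_range]

lemma TF_card (n : ℕ) (h : ℤ) : (TF n h).card = ∑ w ∈ QPF n, c h w.sum := by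
  rw [TF, Finset.card_filter, Finset.sum_product]
  refine Finset.sum_congr rfl fun w hw => ?_
  exact sum_ite_lt (c_le (QPF_sum_fst_le hw))

lemma QPF_zero : QPF 0 = {([] : List (ℤ × ℤ))} := by
  ext w
  simp only [mem_QPF, Finset.mem_singleton, List.length_eq_zero_iff]
  constructor
  · rintro ⟨rfl, -⟩; rfl
  · rintro rfl
    refine ⟨rfl, by simp, fun i => by simp⟩

lemma TF_zero_card (h : ℤ) : (TF 0 h).card = if h = 0 then 1 else 0 := by
  rw [TF_card, QPF_zero, Finset.sum_singleton]
  have h0 : (List.sum ([] : List (ℤ × ℤ))) = ((0 : ℤ), (0 : ℤ)) := rfl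
  rw [h0]
  simp only [c]
  split_ifs with hh <;> omega

lemma MF_zero_card (h : ℤ) : (MF 0 h).card = if h = 0 then 1 else 0 := by
  by_cases hh : h = 0
  · subst hh
    rw [if_pos rfl]
    have : MF 0 0 = {([] : List (ℤ × Bool))} := by
      ext w
      simp only [mem_MF, Finset.mem_singleton, List.length_eq_zero_iff]
      constructor
      · rintro ⟨rfl, -⟩; rfl
      · rintro rfl
        exact ⟨rfl, by simp, fun i => by simp, by simp⟩
    rw [this, Finset.card_singleton]
  · rw [if_neg hh]
    have : MF 0 h = ∅ := by
      apply Finset.eq_empty_of_forall_notMem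
      intro w hw
      obtain ⟨hlen, -, -, hsum⟩ := mem_MF.1 hw
      rw [List.length_eq_zero_iff.1 hlen] at hsum
      simp only [List.map_nil, List.sum_nil] at hsum
      exact hh hsum.symm
    rw [this, Finset.card_empty]

lemma key (q : ℤ × ℤ) (hq1 : 0 ≤ q.1) (hq2 : 0 ≤ q.2) {h : ℤ} (hh : 0 ≤ h) :
    ∑ s ∈ A6, c h (q + s) = 2 * (c (h-1) q + c h q + c (h+1) q) := by
  obtain ⟨x, y⟩ := q
  simp only at hq1 hq2
  have tA := tripleA x y h hq1 hq2 hh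
  have tB := tripleB x y h hq1 hq2 hh
  rw [A6, Finset.sum_insert (by decide), Finset.sum_insert (by decide),
    Finset.sum_insert (by decide), Finset.sum_insert (by decide),
    Finset.sum_insert (by decide), Finset.sum_singleton]
  simp only [Prod.mk_add_mk, add_zero, zero_add]
  rw [show x + -1 = x - 1 by ring, show y + -1 = y - 1 by ring]
  omega

lemma sum_append_fst_le {n : ℕ} {w : List (ℤ × ℤ)} (hw : w ∈ QPF n) {s : ℤ × ℤ}
    (hs : s ∈ A6) : (w.sum + s).1 ≤ ((n + 1 : ℕ) : ℤ) := by
  have h1 := QPF_sum_fst_le hw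
  have h2 := mem_A6_fst_le hs
  rw [Prod.fst_add]
  push_cast
  omega

lemma TF_succ_card (n : ℕ) (h : ℤ) :
    (TF (n+1) h).card = ∑ w ∈ QPF n, ∑ s ∈ A6, c h (w.sum + s) := by
  have hE : (((QPF n ×ˢ A6) ×ˢ Finset.range (n+2)).filter
      (fun x => x.2 < c h (x.1.1.sum + x.1.2))).card
      = ∑ w ∈ QPF n, ∑ s ∈ A6, c h (w.sum + s) := by
    rw [Finset.card_filter, Finset.sum_product, Finset.sum_product]
    refine Finset.sum_congr rfl fun w hw => Finset.sum_congr rfl fun s hs => ?_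
    exact sum_ite_lt (c_le (sum_append_fst_le hw hs))
  rw [← hE]
  refine (Finset.card_bij (fun x _ => (x.1.1 ++ [x.1.2], x.2)) ?_ ?_ ?_).symm
  · rintro ⟨⟨w, s⟩, i⟩ hx
    simp only [Finset.mem_filter, Finset.mem_product, Finset.mem_range] at hx
    obtain ⟨⟨⟨hw, hs⟩, hi⟩, hlt⟩ := hx
    have hsum : (w ++ [s]).sum = w.sum + s := by simp
    have hquad : 0 ≤ (w.sum + s).1 ∧ 0 ≤ (w.sum + s).2 :=
      c_pos (show 0 < c h (w.sum + s) by omega)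
    obtain ⟨hlen, hmem, hpre⟩ := mem_QPF.1 hw
    simp only [TF, Finset.mem_filter, Finset.mem_product, Finset.mem_range]
    refine ⟨⟨mem_QPF.2 ⟨by simp [hlen], ?_, ?_⟩, by omega⟩, ?_⟩
    · intro a ha
      rcases List.mem_append.1 ha with h' | h'
      · exact hmem a h'
      · simp only [List.mem_singleton] at h'; subst h'; exact hs
    · exact (forall_take_append (fun z => 0 ≤ z.1 ∧ 0 ≤ z.2) w s).2 ⟨hpre, hquad⟩
    · rwa [hsum]
  · rintro ⟨⟨w, s⟩, i⟩ hx ⟨⟨w', s'⟩, i'⟩ hx' heq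
    simp only [Finset.mem_filter, Finset.mem_product] at hx hx'
    simp only [Prod.mk.injEq] at heq
    obtain ⟨h1, h2⟩ := heq
    have hlw : w.length = n := (mem_QPF.1 hx.1.1.1).1
    have hlw' : w'.length = n := (mem_QPF.1 hx'.1.1.1).1
    obtain ⟨hww, hss⟩ := List.append_inj h1 (hlw.trans hlw'.symm)
    simp only [List.cons.injEq, and_true] at hss
    simp only [Prod.mk.injEq]
    exact ⟨⟨hww, hss⟩, h2⟩
  · rintro ⟨u, i⟩ hu
    simp only [TF, Finset.mem_filter, Finset.mem_product, Finset.mem_range] at hu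
    obtain ⟨⟨huQ, hi⟩, hlt⟩ := hu
    obtain ⟨hlen, hmem, hpre⟩ := mem_QPF.1 huQ
    rcases List.eq_nil_or_concat u with rfl | ⟨w, s, rfl⟩
    · simp at hlen
    · rw [List.concat_eq_append] at *
      have hwlen : w.length = n := by
        simp only [List.length_append, List.length_singleton] at hlen; omega
      have hpre' := (forall_take_append (fun z => 0 ≤ z.1 ∧ 0 ≤ z.2) w s).1 hpre
      have hwQ : w ∈ QPF n := mem_QPF.2 ⟨hwlen, fun a ha => hmem a (by simp [ha]), hpre'.1⟩
      have hsA : s ∈ A6 := hmem s (by simp)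
      have hsum : (w ++ [s]).sum = w.sum + s := by simp
      refine ⟨⟨⟨w, s⟩, i⟩, ?_, rfl⟩
      simp only [Finset.mem_filter, Finset.mem_product, Finset.mem_range]
      exact ⟨⟨⟨hwQ, hsA⟩, by omega⟩, by rwa [hsum] at hlt⟩

/-- Two coloured copies of the letter `m`. -/
def BL (m : ℤ) : Finset (ℤ × Bool) := {(m, true), (m, false)}

lemma mem_BL {m : ℤ} {a : ℤ × Bool} : a ∈ BL m ↔ a.1 = m := by
  obtain ⟨x, b⟩ := a
  cases b <;> simp [BL, Prod.ext_iff]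

lemma card_BL (m : ℤ) : (BL m).card = 2 := by
  rw [BL, Finset.card_insert_of_notMem (by simp), Finset.card_singleton]

lemma mem_AM_iff {a : ℤ × Bool} : a ∈ AM ↔ (a.1 = -1 ∨ a.1 = 0 ∨ a.1 = 1) := by
  obtain ⟨x, b⟩ := a
  cases b <;> simp [AM, Prod.ext_iff] <;> tauto

lemma MF_succ_card (n : ℕ) {h : ℤ} (hh : 0 ≤ h) :
    (MF (n+1) h).card = 2 * ((MF n (h-1)).card + (MF n h).card + (MF n (h+1)).card) := by
  classical
  set E := (MF n (h-1) ×ˢ BL 1) ∪ (MF n h ×ˢ BL 0) ∪ (MF n (h+1) ×ˢ BL (-1)) with hE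
  have memE : ∀ x : List (ℤ × Bool) × (ℤ × Bool), x ∈ E ↔
      ((x.1 ∈ MF n (h-1) ∧ x.2.1 = 1) ∨ (x.1 ∈ MF n h ∧ x.2.1 = 0) ∨
        (x.1 ∈ MF n (h+1) ∧ x.2.1 = -1)) := by
    intro x
    simp only [hE, Finset.mem_union, Finset.mem_product, mem_BL]
    tauto
  have cardE : E.card = 2 * ((MF n (h-1)).card + (MF n h).card + (MF n (h+1)).card) := by
    have d1 : Disjoint ((MF n (h-1) ×ˢ BL 1) ∪ (MF n h ×ˢ BL 0)) (MF n (h+1) ×ˢ BL (-1)) := by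
      rw [Finset.disjoint_left]
      rintro x hx hx'
      simp only [Finset.mem_union, Finset.mem_product, mem_BL] at hx hx'
      omega
    have d2 : Disjoint (MF n (h-1) ×ˢ BL 1) (MF n h ×ˢ BL 0) := by
      rw [Finset.disjoint_left]
      rintro x hx hx'
      simp only [Finset.mem_product, mem_BL] at hx hx'
      omega
    rw [hE, Finset.card_union_of_disjoint d1, Finset.card_union_of_disjoint d2,
      Finset.card_product, Finset.card_product, Finset.card_product,
      card_BL, card_BL, card_BL]
    ring
  rw [← cardE]
  refine (Finset.card_bij (fun x _ => x.1 ++ [x.2]) ?_ ?_ ?_).symm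
  · rintro ⟨w, a⟩ hx
    rw [memE] at hx
    have hcases : w ∈ MF n (h - a.1) ∧ (a.1 = -1 ∨ a.1 = 0 ∨ a.1 = 1) := by
      rcases hx with ⟨hw, h1⟩ | ⟨hw, h1⟩ | ⟨hw, h1⟩ <;> rw [h1] <;>
        exact ⟨by convert hw using 2 <;> ring, by norm_num⟩
    obtain ⟨hw, haval⟩ := hcases
    obtain ⟨hlen, hmem, hpre, hsum⟩ := mem_MF.1 hw
    have hmap : (w ++ [a]).map Prod.fst = w.map Prod.fst ++ [a.1] := by simp
    refine mem_MF.2 ⟨by simp [hlen], ?_, ?_, ?_⟩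
    · intro b hb
      rcases List.mem_append.1 hb with h' | h'
      · exact hmem b h'
      · simp only [List.mem_singleton] at h'; subst h'
        exact mem_AM_iff.2 haval
    · rw [hmap]
      refine (forall_take_append (fun z => 0 ≤ z) _ _).2 ⟨hpre, ?_⟩
      rw [hsum]; omega
    · rw [hmap, List.sum_append, hsum]; simp
  · rintro ⟨w, a⟩ hx ⟨w', a'⟩ hx' heq
    rw [memE] at hx hx'
    have hlw : w.length = n := by
      rcases hx with ⟨hw, -⟩ | ⟨hw, -⟩ | ⟨hw, -⟩ <;> exact (mem_MF.1 hw).1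
    have hlw' : w'.length = n := by
      rcases hx' with ⟨hw, -⟩ | ⟨hw, -⟩ | ⟨hw, -⟩ <;> exact (mem_MF.1 hw).1
    obtain ⟨hww, hss⟩ := List.append_inj heq (hlw.trans hlw'.symm)
    simp only [List.cons.injEq, and_true] at hss
    simp only [Prod.mk.injEq]
    exact ⟨hww, hss⟩
  · intro u hu
    obtain ⟨hlen, hmem, hpre, hsum⟩ := mem_MF.1 hu
    rcases List.eq_nil_or_concat u with rfl | ⟨w, a, rfl⟩
    · simp at hlen
    · rw [List.concat_eq_append] at *
      have hwlen : w.length = n := by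
        simp only [List.length_append, List.length_singleton] at hlen; omega
      have hmap : (w ++ [a]).map Prod.fst = w.map Prod.fst ++ [a.1] := by simp
      rw [hmap] at hpre hsum
      have hpre' := (forall_take_append (fun z => 0 ≤ z) _ _).1 hpre
      rw [List.sum_append] at hsum
      simp only [List.sum_cons, List.sum_nil, add_zero] at hsum
      have hwsum : (w.map Prod.fst).sum = h - a.1 := by omega
      have haval : a.1 = -1 ∨ a.1 = 0 ∨ a.1 = 1 := mem_AM_iff.1 (hmem a (by simp))
      have hwMF : ∀ h' : ℤ, (w.map Prod.fst).sum = h' → w ∈ MF n h' := by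
        intro h' hh'
        exact mem_MF.2 ⟨hwlen, fun b hb => hmem b (by simp [hb]), hpre'.1, hh'⟩
      refine ⟨⟨w, a⟩, ?_, rfl⟩
      rw [memE]
      rcases haval with h1 | h1 | h1
      · exact Or.inr (Or.inr ⟨hwMF _ (by omega), h1⟩)
      · exact Or.inr (Or.inl ⟨hwMF _ (by omega), h1⟩)
      · exact Or.inl ⟨hwMF _ (by omega), h1⟩

lemma TF_neg_card {n : ℕ} {h : ℤ} (hh : h < 0) : (TF n h).card = 0 := by
  rw [TF_card]
  refine Finset.sum_eq_zero fun w hw => ?_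
  exact c_neg hh (QPF_sum_nonneg hw).1

lemma main : ∀ (n : ℕ) (h : ℤ), (TF n h).card = (MF n h).card := by
  intro n
  induction n with
  | zero =>
      intro h
      rw [TF_zero_card, MF_zero_card]
  | succ n ih =>
      intro h
      by_cases hh : 0 ≤ h
      · rw [TF_succ_card, MF_succ_card n hh]
        calc ∑ w ∈ QPF n, ∑ s ∈ A6, c h (w.sum + s)
            = ∑ w ∈ QPF n, 2 * (c (h-1) w.sum + c h w.sum + c (h+1) w.sum) := by
              refine Finset.sum_congr rfl fun w hw => ?_
              exact key w.sum (QPF_sum_nonneg hw).1 (QPF_sum_nonneg hw).2 hh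
          _ = 2 * ((∑ w ∈ QPF n, c (h-1) w.sum) + (∑ w ∈ QPF n, c h w.sum)
                + (∑ w ∈ QPF n, c (h+1) w.sum)) := by
              rw [← Finset.sum_add_distrib, ← Finset.sum_add_distrib, Finset.mul_sum]
          _ = 2 * ((TF n (h-1)).card + (TF n h).card + (TF n (h+1)).card) := by
              rw [TF_card, TF_card, TF_card]
          _ = 2 * ((MF n (h-1)).card + (MF n h).card + (MF n (h+1)).card) := by
              rw [ih, ih, ih]
      · push_neg at hh
        rw [TF_neg_card hh, MF_neg hh, Finset.card_empty]

end

end CardQP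

lemma mem_A6_iff {a : ℤ × ℤ} : a ∈ CardQP.A6 ↔ a ∈ S1sym := by
  simp [CardQP.A6, S1sym]

theorem card_bicolMotzkin_eq_card_qp_sym (n : ℕ) :
    Nat.card {w : List (ℤ × Bool) // w.length = n ∧ BicolMotzkin w} =
      Nat.card {w : List (ℤ × ℤ) // w.length = n ∧ QPword S1sym w} := by
  classical
  have e1 : {w : List (ℤ × Bool) // w.length = n ∧ BicolMotzkin w}
      ≃ {w // w ∈ CardQP.MF n 0} := by
    refine Equiv.subtypeEquivRight fun w => ?_
    rw [CardQP.mem_MF, BicolMotzkin]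
    constructor
    · rintro ⟨hlen, h1, h2, h3⟩
      exact ⟨hlen, fun a ha => CardQP.mem_AM_iff.2 (h1 a ha), h2, h3⟩
    · rintro ⟨hlen, h1, h2, h3⟩
      exact ⟨hlen, fun a ha => CardQP.mem_AM_iff.1 (h1 a ha), h2, h3⟩
  have hQP : ∀ w : List (ℤ × ℤ), (w.length = n ∧ QPword S1sym w) ↔ w ∈ CardQP.QPF n := by
    intro w
    rw [CardQP.mem_QPF, QPword]
    constructor
    · rintro ⟨hlen, h1, h2⟩
      exact ⟨hlen, fun a ha => mem_A6_iff.2 (h1 a ha), h2⟩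
    · rintro ⟨hlen, h1, h2⟩
      exact ⟨hlen, ⟨fun a ha => mem_A6_iff.1 (h1 a ha), h2⟩⟩
  have hc1 : ∀ w : List (ℤ × ℤ), w ∈ CardQP.QPF n → CardQP.c 0 w.sum = 1 := by
    intro w hw
    exact CardQP.c_zero (CardQP.QPF_sum_nonneg hw).1 (CardQP.QPF_sum_nonneg hw).2
  have e2 : {w : List (ℤ × ℤ) // w.length = n ∧ QPword S1sym w}
      ≃ {x // x ∈ CardQP.TF n 0} := by
    refine ⟨fun w => ⟨(w.1, 0), ?_⟩, fun x => ⟨x.1.1, ?_⟩, ?_, ?_⟩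
    · have hw : w.1 ∈ CardQP.QPF n := (hQP w.1).1 w.2
      simp only [CardQP.TF, Finset.mem_filter, Finset.mem_product, Finset.mem_range]
      refine ⟨⟨hw, by omega⟩, ?_⟩
      rw [hc1 w.1 hw]
      omega
    · have hx := x.2
      simp only [CardQP.TF, Finset.mem_filter, Finset.mem_product] at hx
      exact (hQP x.1.1).2 hx.1.1
    · intro w
      rfl
    · intro x
      have hx := x.2
      simp only [CardQP.TF, Finset.mem_filter, Finset.mem_product] at hx
      have h1 : CardQP.c 0 x.1.1.sum = 1 := hc1 x.1.1 hx.1.1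
      have h2 : x.1.2 = 0 := by omega
      apply Subtype.ext
      exact Prod.ext rfl h2.symm
  rw [Nat.card_congr e1, Nat.card_congr e2, Nat.card_eq_finsetCard, Nat.card_eq_finsetCard]
  exact (CardQP.main n 0).symm
end

section
/- The maps Φ_{1,sym} and Ψ_{1,sym} are mutually inverse length-preserving bijections between bicoloured Motzkin words and quarter-plane words over S_{1,sym}: for every bicoloured Motzkin word u, Φ_{1,sym}(u) is defined (no error occurs), is a quarter-plane word over S_{1,sym} of the same length, and satisfies Ψ_{1,sym}(Φ_{1,sym}(u)) = u; and for every quarter-plane word ū over S_{1,sym}, Ψ_{1,sym}(ū) is a bicoloured Motzkin word with Φ_{1,sym}(Ψ_{1,sym}(ū)) = ū. -/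
/-- The forward step map `F_sym`: from an input letter `(μ, colour)` (with
`true` = solid, `false` = striped) and a counter `(h, v) ∈ ℕ²`, produce the new
counter and the output letter in `S_{1,sym}`; `none` indicates an error. -/
def FSym : (ℤ × Bool) → ℕ × ℕ → Option ((ℕ × ℕ) × (ℤ × ℤ))
  | (μ, c), (h, v) =>
    if c then -- solid
      if μ = 1 then some ((h, v + 1), (0, 1))
      else if μ = 0 then
        if v = 0 then some ((h, 0), (0, 1))
        else some ((h + 1, v - 1), (1, -1))
      else if μ = -1 then
        if 0 < h then some ((h - 1, v), (-1, 0))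
        else if 0 < v then some ((0, v - 1), (1, -1))
        else none
      else none
    else -- striped
      if μ = 1 then some ((h + 1, v), (1, 0))
      else if μ = 0 then
        if h = 0 then some ((0, v), (1, 0))
        else some ((h - 1, v + 1), (-1, 1))
      else if μ = -1 then
        if 0 < v then some ((h, v - 1), (0, -1))
        else if 0 < h then some ((h - 1, 0), (-1, 1))
        else none
      else none

/-- Left-to-right run of `Φ_{1,sym}` from a given counter. -/
def PhiSymRun : ℕ × ℕ → List (ℤ × Bool) → Option (List (ℤ × ℤ))
  | _, [] => some []
  | c, a :: rest =>
    match FSym a c with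
    | none => none
    | some (c', b) => (PhiSymRun c' rest).map (fun t => b :: t)

/-- The partial map `Φ_{1,sym}`: process the input left to right from counter `(0,0)`. -/
def PhiSym (w : List (ℤ × Bool)) : Option (List (ℤ × ℤ)) := PhiSymRun (0, 0) w

/-- The backward step map: from an output letter in `S_{1,sym}` and the
post-application counter, recover the input letter and the pre-application
counter, by reversing the unique applicable case of `F_sym`.  (The value on
letters outside `S_{1,sym}` is irrelevant junk.) -/
def BSym (a : ℤ × ℤ) (c : ℕ × ℕ) : (ℤ × Bool) × ℕ × ℕ :=
  match c with
  | (h, v) =>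
    if a = ((0 : ℤ), (1 : ℤ)) then
      if v = 0 then ((0, true), h, 0) else ((1, true), h, v - 1)
    else if a = ((1 : ℤ), (-1 : ℤ)) then
      if h = 0 then ((-1, true), 0, v + 1) else ((0, true), h - 1, v + 1)
    else if a = ((-1 : ℤ), (0 : ℤ)) then ((-1, true), h + 1, v)
    else if a = ((1 : ℤ), (0 : ℤ)) then
      if h = 0 then ((0, false), 0, v) else ((1, false), h - 1, v)
    else if a = ((-1 : ℤ), (1 : ℤ)) then
      if v = 0 then ((-1, false), h + 1, 0) else ((0, false), h + 1, v - 1)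
    else if a = ((0 : ℤ), (-1 : ℤ)) then ((-1, false), h, v + 1)
    else ((0, true), h, v)

/-- Right-to-left run of `Ψ_{1,sym}`: returns the counter at the left end
(starting from `(0,0)` at the right end) together with the output word. -/
def PsiSymRun : List (ℤ × ℤ) → (ℕ × ℕ) × List (ℤ × Bool)
  | [] => ((0, 0), [])
  | a :: rest =>
    let r := PsiSymRun rest
    let s := BSym a r.1
    (s.2, s.1 :: r.2)

/-- The map `Ψ_{1,sym}`. -/
def PsiSym (w : List (ℤ × ℤ)) : List (ℤ × Bool) := (PsiSymRun w).2

def phiFull : ℕ × ℕ → List (ℤ × Bool) → Option ((ℕ × ℕ) × List (ℤ × ℤ))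
  | c, [] => some (c, [])
  | c, a :: rest =>
    match FSym a c with
    | none => none
    | some (c', b) => (phiFull c' rest).map (fun p => (p.1, b :: p.2))

def psiFrom : ℕ × ℕ → List (ℤ × ℤ) → (ℕ × ℕ) × List (ℤ × Bool)
  | e, [] => (e, [])
  | e, a :: rest =>
    let r := psiFrom e rest
    let s := BSym a r.1
    (s.2, s.1 :: r.2)

lemma phiRun_eq (u : List (ℤ × Bool)) : ∀ c, PhiSymRun c u = (phiFull c u).map Prod.snd := by
  induction u with
  | nil => intro c; rfl
  | cons a rest ih =>
    intro c
    simp only [PhiSymRun, phiFull]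
    cases h : FSym a c with
    | none => rfl
    | some p =>
      obtain ⟨c', b⟩ := p
      simp [ih c', Option.map_map]
      cases phiFull c' rest <;> rfl

lemma psiRun_eq (w : List (ℤ × ℤ)) : PsiSymRun w = psiFrom (0,0) w := by
  induction w with
  | nil => rfl
  | cons a rest ih => simp only [PsiSymRun, psiFrom, ih]

lemma step_inv1 {a : ℤ × Bool} {c c' : ℕ × ℕ} {b : ℤ × ℤ}
    (h : FSym a c = some (c', b)) : BSym b c' = (a, c) := by
  obtain ⟨μ, col⟩ := a
  obtain ⟨x, y⟩ := c
  cases col <;> simp only [FSym, if_true, if_false, Bool.false_eq_true] at h <;>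
    split_ifs at h with h1 h2 h3 h4 <;>
    first
    | exact Option.noConfusion h
    | · injection h with h
        injection h with hc hb
        subst hc; subst hb
        try subst h1
        try subst h2
        try subst h4
        simp only [BSym, Prod.mk.injEq]
        norm_num
        try split_ifs
        all_goals simp_all [Prod.ext_iff]
        all_goals omega
lemma step_inv2 {a : ℤ × ℤ} (ha : a ∈ S1sym) (c : ℕ × ℕ) :
    FSym (BSym a c).1 (BSym a c).2 = some (c, a) := by
  obtain ⟨x, y⟩ := c
  simp only [S1sym, Set.mem_insert_iff, Set.mem_singleton_iff] at ha
  rcases ha with h|h|h|h|h|h <;> subst h <;>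
    simp only [BSym, Prod.mk.injEq] <;> norm_num <;>
    (try split_ifs) <;>
    simp_all [FSym, Prod.ext_iff] <;> omega

lemma step_prop {a : ℤ × Bool} {c c' : ℕ × ℕ} {b : ℤ × ℤ}
    (h : FSym a c = some (c', b)) :
    (a.1 = -1 ∨ a.1 = 0 ∨ a.1 = 1) ∧
    ((c'.1 : ℤ) + c'.2 = c.1 + c.2 + a.1) ∧
    b ∈ S1sym ∧
    ((c.1 = 0 ∨ (c.1 : ℤ) ≤ (c'.1 : ℤ) - b.1) ∧ (c.2 = 0 ∨ (c.2 : ℤ) ≤ (c'.2 : ℤ) - b.2)) ∧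
    ((c'.1 : ℤ) - c.1 ≤ b.1 ∧ (c'.2 : ℤ) - c.2 ≤ b.2) := by
  obtain ⟨μ, col⟩ := a
  obtain ⟨x, y⟩ := c
  cases col <;> simp only [FSym, if_true, if_false, Bool.false_eq_true] at h <;>
    split_ifs at h with h1 h2 h3 h4 <;>
    first
    | exact Option.noConfusion h
    | · injection h with h
        injection h with hc hb
        subst hc; subst hb
        refine ⟨by omega, ?_, by simp [S1sym], ⟨?_, ?_⟩, ?_, ?_⟩ <;>
          (try simp_all) <;>
          first | omega | (left; omega) | (right; omega)

lemma step_def {μ : ℤ} {col : Bool} {c : ℕ × ℕ} (hμ : μ = -1 ∨ μ = 0 ∨ μ = 1)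
    (hsum : 0 ≤ (c.1 : ℤ) + c.2 + μ) : ∃ c' b, FSym (μ, col) c = some (c', b) := by
  obtain ⟨x, y⟩ := c
  simp only at hsum
  rcases hμ with h|h|h <;> subst h <;> cases col <;>
    simp only [FSym, if_true, if_false, Bool.false_eq_true] <;>
    norm_num <;> split_ifs <;> first | exact ⟨_, _, _, _, rfl⟩ | (exfalso; omega)
lemma phi_then_psi : ∀ (u : List (ℤ × Bool)) (c e : ℕ × ℕ) (v : List (ℤ × ℤ)),
    phiFull c u = some (e, v) → psiFrom e v = (c, u) := by
  intro u
  induction u with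
  | nil =>
    intro c e v h
    simp only [phiFull, Option.some.injEq, Prod.mk.injEq] at h
    obtain ⟨rfl, rfl⟩ := h
    rfl
  | cons a rest ih =>
    intro c e v h
    cases hf : FSym a c with
    | none => rw [phiFull, hf] at h; simp at h
    | some p =>
      obtain ⟨c', b⟩ := p
      cases hr : phiFull c' rest with
      | none => simp only [phiFull, hf, hr, Option.map_none] at h; simp at h
      | some q =>
        obtain ⟨e', v'⟩ := q
        simp only [phiFull, hf, hr, Option.map_some, Option.some.injEq, Prod.mk.injEq] at h
        obtain ⟨rfl, rfl⟩ := h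
        simp only [psiFrom, ih _ _ _ hr, step_inv1 hf]

lemma psi_then_phi : ∀ (w : List (ℤ × ℤ)) (e : ℕ × ℕ), (∀ a ∈ w, a ∈ S1sym) →
    phiFull (psiFrom e w).1 (psiFrom e w).2 = some (e, w) := by
  intro w
  induction w with
  | nil => intro e _; rfl
  | cons a rest ih =>
    intro e hS
    have hrest := ih e (fun x hx => hS x (List.mem_cons_of_mem a hx))
    have ha := hS a (List.mem_cons_self)
    have hstep := step_inv2 ha (psiFrom e rest).1
    simp only [psiFrom, phiFull, hstep, hrest, Option.map_some]
lemma phi_props : ∀ (u : List (ℤ × Bool)) (c e : ℕ × ℕ) (v : List (ℤ × ℤ)),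
    phiFull c u = some (e, v) →
    v.length = u.length ∧ (∀ a ∈ u, a.1 = -1 ∨ a.1 = 0 ∨ a.1 = 1) ∧
    (∀ i, 0 ≤ (c.1 : ℤ) + c.2 + ((u.map Prod.fst).take i).sum) ∧
    (e.1 : ℤ) + e.2 = c.1 + c.2 + (u.map Prod.fst).sum := by
  intro u
  induction u with
  | nil =>
    intro c e v h
    simp only [phiFull, Option.some.injEq, Prod.mk.injEq] at h
    obtain ⟨rfl, rfl⟩ := h
    refine ⟨rfl, by simp, fun i => by simp; positivity, by simp⟩
  | cons a rest ih =>
    intro c e v h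
    cases hf : FSym a c with
    | none => simp only [phiFull, hf] at h; simp at h
    | some p =>
      obtain ⟨c', b⟩ := p
      cases hr : phiFull c' rest with
      | none => simp only [phiFull, hf, hr, Option.map_none] at h; simp at h
      | some q =>
        obtain ⟨e', v'⟩ := q
        simp only [phiFull, hf, hr, Option.map_some, Option.some.injEq, Prod.mk.injEq] at h
        obtain ⟨rfl, rfl⟩ := h
        obtain ⟨hlen, hlet, hpre, htot⟩ := ih c' e' v' hr
        obtain ⟨hμ, hsum, -, -, -⟩ := step_prop hf
        refine ⟨by simp [hlen], ?_, ?_, ?_⟩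
        · intro x hx
          rcases List.mem_cons.mp hx with rfl | hx
          · exact hμ
          · exact hlet x hx
        · intro i
          cases i with
          | zero => simp; positivity
          | succ j =>
            have := hpre j
            simp only [List.map_cons, List.take_succ_cons, List.sum_cons]
            omega
        · simp only [List.map_cons, List.sum_cons]
          omega

lemma phi_defined : ∀ (u : List (ℤ × Bool)) (c : ℕ × ℕ) (p : ℤ × ℤ),
    (∀ a ∈ u, a.1 = -1 ∨ a.1 = 0 ∨ a.1 = 1) →
    (∀ i, 0 ≤ (c.1 : ℤ) + c.2 + ((u.map Prod.fst).take i).sum) →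
    (c.1 : ℤ) ≤ p.1 → (c.2 : ℤ) ≤ p.2 →
    ∃ e v, phiFull c u = some (e, v) ∧ (∀ a ∈ v, a ∈ S1sym) ∧
      (∀ i, 0 ≤ p.1 + ((v.take i).sum).1 ∧ 0 ≤ p.2 + ((v.take i).sum).2) := by
  intro u
  induction u with
  | nil =>
    intro c p _ _ hp1 hp2
    refine ⟨c, [], rfl, by simp, fun i => by simp; constructor <;> omega⟩
  | cons a rest ih =>
    intro c p hlet hpre hp1 hp2
    obtain ⟨μ, col⟩ := a
    have hμ : μ = -1 ∨ μ = 0 ∨ μ = 1 := hlet (μ, col) (List.mem_cons_self)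
    have h0 : 0 ≤ (c.1 : ℤ) + c.2 + μ := by
      have := hpre 1
      simpa using this
    obtain ⟨c', b, hf⟩ := step_def (col := col) hμ h0
    obtain ⟨-, hsum, hbS, -, hd1, hd2⟩ := step_prop hf
    obtain ⟨e, v', hr, hvS, hqp⟩ := ih c' (p + b)
      (fun x hx => hlet x (List.mem_cons_of_mem _ hx))
      (fun i => by have := hpre (i + 1); simp only [List.map_cons, List.take_succ_cons, List.sum_cons] at this; omega)
      (by simp only [Prod.fst_add]; omega)
      (by simp only [Prod.snd_add]; omega)
    refine ⟨e, b :: v', ?_, ?_, ?_⟩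
    · simp only [phiFull, hf, hr, Option.map_some]
    · intro x hx
      rcases List.mem_cons.mp hx with rfl | hx
      · exact hbS
      · exact hvS x hx
    · intro i
      cases i with
      | zero => simp; constructor <;> omega
      | succ j =>
        have := hqp j
        simp only [List.take_succ_cons, List.sum_cons, Prod.fst_add, Prod.snd_add] at *
        constructor <;> [linarith [this.1]; linarith [this.2]]

lemma psi_counter : ∀ (w : List (ℤ × ℤ)) (p : ℤ × ℤ),
    (∀ a ∈ w, a ∈ S1sym) →
    (∀ i, 0 ≤ p.1 + ((w.take i).sum).1 ∧ 0 ≤ p.2 + ((w.take i).sum).2) →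
    ((psiFrom (0, 0) w).1.1 : ℤ) ≤ p.1 ∧ ((psiFrom (0, 0) w).1.2 : ℤ) ≤ p.2 := by
  intro w
  induction w with
  | nil =>
    intro p _ hqp
    have := hqp 0
    simpa [psiFrom] using this
  | cons a rest ih =>
    intro p hS hqp
    have ha := hS a (List.mem_cons_self)
    have hrest := ih (p + a) (fun x hx => hS x (List.mem_cons_of_mem _ hx))
      (fun i => by
        have := hqp (i + 1)
        simp only [List.take_succ_cons, List.sum_cons, Prod.fst_add, Prod.snd_add] at *
        constructor <;> [linarith [this.1]; linarith [this.2]])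
    have hp0 := hqp 0
    simp only [List.take_zero, List.sum_nil, Prod.fst_zero, Prod.snd_zero, add_zero] at hp0
    set r := psiFrom (0, 0) rest with hrdef
    have hstep := step_inv2 ha r.1
    obtain ⟨-, -, -, ⟨hd1, hd2⟩, -⟩ := step_prop hstep
    simp only [psiFrom, ← hrdef, Prod.fst_add, Prod.snd_add] at *
    constructor
    · rcases hd1 with h|h
      · rw [h]; exact_mod_cast hp0.1
      · omega
    · rcases hd2 with h|h
      · rw [h]; exact_mod_cast hp0.2
      · omega
theorem phiSym_psiSym_mutually_inverse :
    (∀ u : List (ℤ × Bool), BicolMotzkin u →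
      ∃ v, PhiSym u = some v ∧ v.length = u.length ∧ QPword S1sym v ∧ PsiSym v = u) ∧
    (∀ w : List (ℤ × ℤ), QPword S1sym w →
      BicolMotzkin (PsiSym w) ∧ PhiSym (PsiSym w) = some w) := by
  constructor
  · intro u hu
    obtain ⟨hμ, hpre, htot⟩ := hu
    obtain ⟨e, v, hfull, hvS, hqp⟩ := phi_defined u (0, 0) (0, 0) hμ
      (fun i => by simpa using hpre i) (by simp) (by simp)
    obtain ⟨hlen, -, -, htot'⟩ := phi_props u (0, 0) e v hfull
    have he : e = (0, 0) := by
      obtain ⟨e1, e2⟩ := e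
      simp only [htot] at htot'
      simp only [Prod.mk.injEq]
      constructor <;> omega
    subst he
    refine ⟨v, ?_, hlen, ⟨hvS, fun i => by have := hqp i; simpa using this⟩, ?_⟩
    · rw [PhiSym, phiRun_eq, hfull]
      rfl
    · have := phi_then_psi u (0, 0) (0, 0) v hfull
      rw [PsiSym, psiRun_eq, this]
  · intro w hw
    obtain ⟨hS, hqp⟩ := hw
    have hc := psi_counter w (0, 0) hS (fun i => by simpa using hqp i)
    have hc0 : (psiFrom (0, 0) w).1 = (0, 0) := by
      have h1 := hc.1
      have h2 := hc.2
      norm_num at h1 h2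
      have h3 : (psiFrom (0, 0) w).1.1 = 0 ∧ (psiFrom (0, 0) w).1.2 = 0 := by
        constructor <;> omega
      exact Prod.ext h3.1 h3.2
    have hphi := psi_then_phi w (0, 0) hS
    rw [hc0] at hphi
    have hpsi : PsiSym w = (psiFrom (0, 0) w).2 := by rw [PsiSym, psiRun_eq]
    constructor
    · obtain ⟨-, hlet, hpre, htot⟩ := phi_props _ (0, 0) (0, 0) w (by rw [← hpsi] at hphi; exact hphi)
      exact ⟨hlet, fun i => by simpa using hpre i, by simpa using htot.symm⟩
    · rw [PhiSym, phiRun_eq, hpsi, hphi]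
      rfl
end

section
/- For every word w over Σ_p, the map Φ_p is defined at w (i.e., the left-to-right process never meets the forbidden input (−1, ε, 0)) if and only if every prefix sum of w is nonnegative. -/
/-- A word over the alphabet `A_p = { a_{ℓ,m} : ℓ + m ≤ p - 1 }`; letters are
encoded as pairs `(ℓ, m) : ℕ × ℕ`.  The stack `H` is represented with its most
recently appended (rightmost) letter at the *head* of the list. -/
def HValid (p : ℕ) (H : List (ℕ × ℕ)) : Prop := ∀ x ∈ H, x.1 + x.2 + 1 ≤ p

/-- The forward step map `F`: from an input letter `μ ∈ Σ_p` and a counter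
`(H, v)`, produce the new counter together with the output letter in `S_p`;
`none` is the error on the forbidden input `(-1, ε, 0)`.  The stack `H` has its
most recently appended letter at the head of the list. -/
def Fstep (p : ℕ) (μ : ℤ) (H : List (ℕ × ℕ)) (v : ℕ) :
    Option (List (ℕ × ℕ) × ℕ × (ℤ × ℤ)) :=
  if μ = (p : ℤ) then some (H, v + p, ((0 : ℤ), (p : ℤ)))
  else if 0 ≤ μ then
    -- here `0 ≤ μ ≤ p - 1`
    if v = 0 then some (H, μ.toNat, ((0 : ℤ), (p : ℤ)))
    else some ((μ.toNat, 0) :: H, v - 1, ((1 : ℤ), (-1 : ℤ)))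
  else
    -- here `μ = -1`
    match H, v with
    | [], 0 => none
    | [], v' + 1 => some ([], v', ((1 : ℤ), (-1 : ℤ)))
    | (l, m) :: H', 0 => some (H', l, (-(m : ℤ) - 1, (p : ℤ) - (m : ℤ) - 1))
    | (l, m) :: H', v' + 1 =>
      if l + m + 1 = p then
        some (H', (v' + 1) + l, (-(m : ℤ) - 1, (p : ℤ) - (m : ℤ) - 1))
      else some ((l, m + 1) :: H', v', ((1 : ℤ), (-1 : ℤ)))

/-- The left-to-right process: starting from the counter `(H, v)`, process the
letters of the input word in order, returning the final counter together with
the output word, or `none` if an error occurs. -/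
def PhiRun (p : ℕ) : List (ℕ × ℕ) → ℕ → List ℤ →
    Option (List (ℕ × ℕ) × ℕ × List (ℤ × ℤ))
  | H, v, [] => some (H, v, [])
  | H, v, μ :: w =>
    match Fstep p μ H v with
    | none => none
    | some (H', v', a) => (PhiRun p H' v' w).map (fun r => (r.1, r.2.1, a :: r.2.2))

/-- The partial map `Φ_p`: run the left-to-right process from `(ε, 0)` and
return the output word. -/
def Phi (p : ℕ) (w : List ℤ) : Option (List (ℤ × ℤ)) :=
  (PhiRun p [] 0 w).map (fun r => r.2.2)

/-- The backward step map `B`: from a counter `(H, v)` and a letter `ā ∈ S_p`,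
produce the input letter `μ ∈ Σ_p` and the previous counter.  The stack `H` has
its most recently appended letter at the head of the list.  (The value on
letters outside `S_p` is irrelevant junk.) -/
def Bstep (p : ℕ) (H : List (ℕ × ℕ)) (v : ℕ) (a : ℤ × ℤ) :
    ℤ × List (ℕ × ℕ) × ℕ :=
  if a = ((1 : ℤ), (-1 : ℤ)) then
    match H with
    | [] => (-1, [], v + 1)
    | (l, 0) :: H' => ((l : ℤ), H', v + 1)
    | (l, m + 1) :: H' => (-1, (l, m) :: H', v + 1)
  else if a.1 = 0 then
    -- here `a = (0, p)`
    if v ≤ p - 1 then ((v : ℤ), H, 0) else ((p : ℤ), H, v - p)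
  else
    -- here `a = (-m - 1, p - m - 1)` with `0 ≤ m ≤ p - 1`
    let m : ℕ := (-a.1 - 1).toNat
    if v ≤ p - m - 1 then (-1, (v, m) :: H, 0)
    else (-1, (p - m - 1, m) :: H, v - (p - m - 1))

/-- The right-to-left process: starting from the counter `(ε, 0)` at the right
end of the word, process the letters from right to left, returning the counter
at the left end together with the output word. -/
def PsiRun (p : ℕ) : List (ℤ × ℤ) → List (ℕ × ℕ) × ℕ × List ℤ
  | [] => ([], 0, [])
  | a :: rest =>
    let r := PsiRun p rest
    let s := Bstep p r.1 r.2.1 a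
    (s.2.1, s.2.2, s.1 :: r.2.2)

/-- The total map `Ψ_p`. -/
def Psi (p : ℕ) (w : List (ℤ × ℤ)) : List ℤ := (PsiRun p w).2.2

/-- The weight `wt_ℓ`, determined on letters by `wt_ℓ(a_{ℓ,m}) = ℓ + 1`. -/
def wtl (H : List (ℕ × ℕ)) : ℕ := (H.map (fun x => x.1 + 1)).sum

/-- The weight `wt_m`, determined on letters by `wt_m(a_{ℓ,m}) = m + 1`. -/
def wtm (H : List (ℕ × ℕ)) : ℕ := (H.map (fun x => x.2 + 1)).sum

lemma wtl_cons (a : ℕ × ℕ) (H : List (ℕ × ℕ)) : wtl (a :: H) = a.1 + 1 + wtl H := by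
  simp [wtl]

lemma fstep_none (p : ℕ) (μ : ℤ) (H : List (ℕ × ℕ)) (v : ℕ)
    (h : Fstep p μ H v = none) : μ < 0 ∧ H = [] ∧ v = 0 := by
  unfold Fstep at h
  split at h
  · simp at h
  · split at h <;> [skip; (refine ⟨by omega, ?_⟩)]
    · split at h <;> simp at h
    · match H, v with
      | [], 0 => exact ⟨rfl, rfl⟩
      | [], v' + 1 => simp at h
      | (l, m) :: H', 0 => simp at h
      | (l, m) :: H', v' + 1 =>
        simp only at h; split at h <;> simp at h

lemma fstep_sum (p : ℕ) (μ : ℤ) (H H' : List (ℕ × ℕ)) (v v' : ℕ) (a : ℤ × ℤ)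
    (hμ : -1 ≤ μ) (hμ2 : μ ≤ (p : ℤ))
    (h : Fstep p μ H v = some (H', v', a)) :
    ((v' : ℤ) + wtl H') = (v : ℤ) + wtl H + μ := by
  unfold Fstep at h
  split at h
  · rename_i hpp
    injection h with h'; injection h' with h1 h2; injection h2 with h2 h3
    subst h1 h2 hpp; push_cast; ring
  · split at h
    · rename_i hμ0
      split at h
      · rename_i hv0
        injection h with h'; injection h' with h1 h2; injection h2 with h2 h3
        subst h1 h2 hv0
        rw [Int.toNat_of_nonneg hμ0]; ring
      · rename_i hv0
        injection h with h'; injection h' with h1 h2; injection h2 with h2 h3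
        subst h1 h2
        rw [wtl_cons]; push_cast [Int.toNat_of_nonneg hμ0]; omega
    · rename_i hμ0
      have hμm1 : μ = -1 := by omega
      subst hμm1
      match H, v with
      | [], 0 => simp at h
      | [], v2 + 1 =>
        injection h with h'; injection h' with h1 h2; injection h2 with h2 h3
        subst h1 h2; push_cast; ring
      | (l, m) :: H2, 0 =>
        injection h with h'; injection h' with h1 h2; injection h2 with h2 h3
        subst h1 h2; rw [wtl_cons]; push_cast; ring
      | (l, m) :: H2, v2 + 1 =>
        simp only at h
        split at h
        · injection h with h'; injection h' with h1 h2; injection h2 with h2 h3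
          subst h1 h2; simp only [wtl_cons]; push_cast; ring
        · injection h with h'; injection h' with h1 h2; injection h2 with h2 h3
          subst h1 h2; simp only [wtl_cons]; push_cast; ring

lemma phiRun_isSome_iff (p : ℕ) (w : List ℤ) :
    ∀ H v, SigmaWord p w →
      ((PhiRun p H v w).isSome ↔
        ∀ i, 0 ≤ ((v : ℤ) + wtl H) + (w.take i).sum) := by
  induction w with
  | nil =>
    intro H v _
    simp only [PhiRun, Option.isSome_some, List.take_nil, List.sum_nil, add_zero]
    constructor
    · intro _ i; positivity
    · intro _; trivial
  | cons μ w ih =>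
    intro H v hw
    have hμ : -1 ≤ μ ∧ μ ≤ (p : ℤ) := hw μ (by simp)
    have hw' : SigmaWord p w := fun a ha => hw a (by simp [ha])
    simp only [PhiRun]
    cases hF : Fstep p μ H v with
    | none =>
      obtain ⟨h1, h2, h3⟩ := fstep_none p μ H v hF
      subst h2 h3
      simp only [Option.isSome_none, Bool.false_eq_true, false_iff, not_forall]
      refine ⟨1, ?_⟩
      simp only [List.take_succ_cons, List.take_zero, List.sum_cons, List.sum_nil]
      simp [wtl]; omega
    | some r =>
      obtain ⟨H', v', a⟩ := r
      have hsum := fstep_sum p μ H H' v v' a hμ.1 hμ.2 hF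
      rw [show (Option.map (fun r => (r.1, r.2.1, a :: r.2.2)) (PhiRun p H' v' w)).isSome = (PhiRun p H' v' w).isSome from by cases PhiRun p H' v' w <;> rfl]
      rw [ih H' v' hw']
      constructor
      · intro h i
        match i with
        | 0 => simp; positivity
        | i + 1 =>
          have := h i
          simp only [List.take_succ_cons, List.sum_cons]
          omega
      · intro h i
        have := h (i + 1)
        simp only [List.take_succ_cons, List.sum_cons] at this
        omega

theorem phi_defined_iff_prefix_sums_nonneg (p : ℕ) (hp : 1 ≤ p)
    (w : List ℤ) (hw : SigmaWord p w) :
    (PhiRun p [] 0 w).isSome ↔ ∀ i, 0 ≤ (w.take i).sum := by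
  rw [phiRun_isSome_iff p w [] 0 hw]
  simp [wtl]
end

section
/- For every p-Łukasiewicz word w, Φ_p(w) is defined (no error occurs) and Φ_p(w) is a quarter-plane p-tandem word of the same length as w. -/
lemma Fstep_spec (p : ℕ) (μ : ℤ) (hμ1 : -1 ≤ μ) (hμ2 : μ ≤ (p:ℤ))
    (H : List (ℕ × ℕ)) (v : ℕ) (hH : HValid p H)
    (hpos : 0 ≤ (v : ℤ) + (wtl H : ℤ) + μ) :
    ∃ H₁ v₁ a, Fstep p μ H v = some (H₁, v₁, a) ∧ HValid p H₁ ∧ InSp p a ∧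
      (v₁ : ℤ) + (wtl H₁ : ℤ) = (v : ℤ) + (wtl H : ℤ) + μ ∧
      (wtm H₁ : ℤ) ≤ (wtm H : ℤ) + a.1 ∧ (v₁ : ℤ) ≤ (v : ℤ) + a.2 := by
  by_cases hp : μ = (p : ℤ)
  · refine ⟨H, v + p, ((0:ℤ),(p:ℤ)), by simp [Fstep, hp], hH, Or.inr ⟨0, by simp, by simp⟩, ?_, ?_, ?_⟩
    · push_cast; omega
    · simp
    · push_cast; omega
  · by_cases h0 : 0 ≤ μ
    · by_cases hv : v = 0
      · refine ⟨H, μ.toNat, ((0:ℤ),(p:ℤ)), by simp [Fstep, hp, h0, hv], hH,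
          Or.inr ⟨0, by simp, by simp⟩, ?_, ?_, ?_⟩
        · subst hv; simp [Int.toNat_of_nonneg h0]; push_cast; ring
        · simp
        · subst hv; simp [Int.toNat_of_nonneg h0]; omega
      · refine ⟨(μ.toNat, 0) :: H, v - 1, ((1:ℤ),(-1:ℤ)), by simp [Fstep, hp, h0, hv], ?_,
          Or.inl rfl, ?_, ?_, ?_⟩
        · intro x hx
          rcases List.mem_cons.mp hx with hx | hx
          · subst hx; simp; omega
          · exact hH x hx
        · simp [wtl]; push_cast [Int.toNat_of_nonneg h0]; omega
        · simp [wtm]; push_cast; omega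
        · simp; omega
    · have hμ : μ = -1 := by omega
      subst hμ
      match H, v with
      | [], 0 => simp [wtl] at hpos
      | [], v' + 1 =>
        refine ⟨[], v', ((1:ℤ),(-1:ℤ)), by simp [Fstep], hH, Or.inl rfl, ?_, by simp, by push_cast; omega⟩
        push_cast; simp [wtl]
      | (l, m) :: H', 0 =>
        have hlm : l + m + 1 ≤ p := hH (l, m) (by simp)
        refine ⟨H', l, (-(m:ℤ) - 1, (p:ℤ) - m - 1), by simp [Fstep], fun x hx => hH x (by simp [hx]),
          Or.inr ⟨m + 1, by omega, by simp [Prod.ext_iff]; constructor <;> push_cast <;> ring⟩, ?_, ?_, ?_⟩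
        · simp [wtl]; push_cast; ring
        · simp [wtm]; push_cast; omega
        · simp; push_cast; omega
      | (l, m) :: H', v' + 1 =>
        have hlm : l + m + 1 ≤ p := hH (l, m) (by simp)
        by_cases hfull : l + m + 1 = p
        · refine ⟨H', (v' + 1) + l, (-(m:ℤ) - 1, (p:ℤ) - m - 1), by simp [Fstep, hfull], fun x hx => hH x (by simp [hx]),
            Or.inr ⟨m + 1, by omega, by simp [Prod.ext_iff]; constructor <;> push_cast <;> ring⟩, ?_, ?_, ?_⟩
          · simp [wtl]; push_cast; ring
          · simp [wtm]; push_cast; omega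
          · simp; omega
        · refine ⟨(l, m + 1) :: H', v', ((1:ℤ),(-1:ℤ)), by simp [Fstep, hfull], ?_, Or.inl rfl, ?_, ?_, ?_⟩
          · intro x hx
            rcases List.mem_cons.mp hx with hx | hx
            · subst hx; simp; omega
            · exact hH x (List.mem_cons_of_mem _ hx)
          · simp [wtl]; push_cast; ring
          · simp [wtm]; push_cast; omega
          · simp

lemma PhiRun_spec (p : ℕ) : ∀ (w : List ℤ) (H : List (ℕ × ℕ)) (v : ℕ),
    SigmaWord p w → HValid p H →
    (∀ i, 0 ≤ (v : ℤ) + (wtl H : ℤ) + (w.take i).sum) →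
    ∃ H' v' wb, PhiRun p H v w = some (H', v', wb) ∧ wb.length = w.length ∧
      (∀ a ∈ wb, InSp p a) ∧
      ∀ i, -(wtm H : ℤ) ≤ ((wb.take i).sum).1 ∧ -(v : ℤ) ≤ ((wb.take i).sum).2 := by
  intro w
  induction w with
  | nil =>
    intro H v _ _ _
    refine ⟨H, v, [], rfl, rfl, by simp, fun i => by simp⟩
  | cons μ w ih =>
    intro H v hσ hH hpre
    have hμ := hσ μ (by simp)
    obtain ⟨H₁, v₁, a, hF, hH₁, ha, heq, hx, hy⟩ :=
      Fstep_spec p μ hμ.1 hμ.2 H v hH (by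
        have := hpre 1
        simpa using this)
    have hpre' : ∀ i, 0 ≤ (v₁ : ℤ) + (wtl H₁ : ℤ) + (w.take i).sum := by
      intro i
      have := hpre (i + 1)
      simp only [List.take_succ_cons, List.sum_cons] at this
      omega
    obtain ⟨H', v', wb, hrun, hlen, hmem, hsum⟩ :=
      ih H₁ v₁ (fun b hb => hσ b (by simp [hb])) hH₁ hpre'
    refine ⟨H', v', a :: wb, ?_, by simp [hlen], ?_, ?_⟩
    · simp [PhiRun, hF, hrun]
    · intro b hb
      rcases List.mem_cons.mp hb with hb | hb
      · exact hb ▸ ha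
      · exact hmem b hb
    · intro i
      cases i with
      | zero => simp
      | succ i =>
        have := hsum i
        simp only [List.take_succ_cons, List.sum_cons, Prod.fst_add, Prod.snd_add]
        constructor <;> omega

theorem phi_maps_lukasiewicz_to_tandem (p : ℕ) (hp : 1 ≤ p)
    (w : List ℤ) (hw : Lukasiewicz p w) :
    ∃ wb, Phi p w = some wb ∧ wb.length = w.length ∧ Tandem p wb := by
  obtain ⟨hσ, hpre, hsum⟩ := hw
  obtain ⟨H', v', wb, hrun, hlen, hmem, hs⟩ :=
    PhiRun_spec p w [] 0 hσ (fun x hx => by simp at hx)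
      (fun i => by simpa [wtl] using hpre i)
  refine ⟨wb, ?_, hlen, hmem, fun i => ?_⟩
  · simp [Phi, hrun]
  · have := hs i
    simp [wtm] at this
    exact this
end

section
/- Let w be a word over Σ_p at which Φ_p is defined, with left-to-right counters (H_i, v_i) and output letters w̄_i, and write (x̄_i, ȳ_i) = w̄_1 + … + w̄_i. Then for every i one has x̄_i ≥ wt_m(H_i) and ȳ_i ≥ v_i; in particular every prefix of Φ_p(w) has partial sum with both coordinates nonnegative. -/
theorem phiRun_append (p : ℕ) : ∀ (l1 l2 : List ℤ) (H : List (ℕ × ℕ)) (v : ℕ),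
    PhiRun p H v (l1 ++ l2) =
      match PhiRun p H v l1 with
      | none => none
      | some (H1, v1, o1) =>
        (PhiRun p H1 v1 l2).map (fun r => (r.1, r.2.1, o1 ++ r.2.2)) := by
  intro l1
  induction l1 with
  | nil =>
    intro l2 H v
    show PhiRun p H v l2 = _
    rw [show PhiRun p H v [] = some (H, v, []) from rfl]
    cases h2 : PhiRun p H v l2 with
    | none => simp [h2]
    | some r => simp [h2]
  | cons μ t ih =>
    intro l2 H v
    show PhiRun p H v (μ :: (t ++ l2)) = _
    rw [show PhiRun p H v (μ :: (t ++ l2)) = match Fstep p μ H v with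
      | none => none
      | some (H', v', a) => (PhiRun p H' v' (t ++ l2)).map (fun r => (r.1, r.2.1, a :: r.2.2))
      from rfl]
    rw [show PhiRun p H v (μ :: t) = match Fstep p μ H v with
      | none => none
      | some (H', v', a) => (PhiRun p H' v' t).map (fun r => (r.1, r.2.1, a :: r.2.2))
      from rfl]
    cases hf : Fstep p μ H v with
    | none => rfl
    | some s =>
      obtain ⟨H', v', a⟩ := s
      dsimp only
      rw [ih]
      cases ht : PhiRun p H' v' t with
      | none => simp
      | some r =>
        obtain ⟨H1, v1, o1⟩ := r
        cases h2 : PhiRun p H1 v1 l2 with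
        | none => simp [h2]
        | some r2 => simp [h2]

theorem phiRun_single (p : ℕ) (μ : ℤ) (H : List (ℕ × ℕ)) (v : ℕ) :
    PhiRun p H v [μ] = (Fstep p μ H v).map (fun s => (s.1, s.2.1, [s.2.2])) := by
  rw [show PhiRun p H v [μ] = match Fstep p μ H v with
    | none => none
    | some (H', v', a) => (PhiRun p H' v' []).map (fun r => (r.1, r.2.1, a :: r.2.2))
    from rfl]
  cases Fstep p μ H v with
  | none => rfl
  | some s => rfl

theorem fstep_inv (p : ℕ) (hp : 1 ≤ p) (μ : ℤ) (hμ1 : -1 ≤ μ) (hμ2 : μ ≤ (p : ℤ))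
    (H H' : List (ℕ × ℕ)) (v v' : ℕ) (a : ℤ × ℤ)
    (hH : HValid p H) (h : Fstep p μ H v = some (H', v', a)) :
    HValid p H' ∧ (wtm H' : ℤ) ≤ (wtm H : ℤ) + a.1 ∧ (v' : ℤ) ≤ (v : ℤ) + a.2 := by
  unfold Fstep at h
  split_ifs at h with h1 h2 h3
  · -- μ = p
    simp only [Option.some.injEq, Prod.mk.injEq] at h
    obtain ⟨rfl, rfl, rfl⟩ := h
    refine ⟨hH, by simp, by push_cast; omega⟩
  · -- 0 ≤ μ < p, v = 0
    simp only [Option.some.injEq, Prod.mk.injEq] at h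
    obtain ⟨rfl, rfl, rfl⟩ := h
    refine ⟨hH, by simp, ?_⟩
    subst h3
    simp only
    omega
  · -- 0 ≤ μ < p, v > 0
    simp only [Option.some.injEq, Prod.mk.injEq] at h
    obtain ⟨rfl, rfl, rfl⟩ := h
    refine ⟨?_, ?_, ?_⟩
    · intro x hx
      rcases List.mem_cons.mp hx with rfl | hx
      · show μ.toNat + 0 + 1 ≤ p
        omega
      · exact hH x hx
    · simp only [wtm, List.map_cons, List.sum_cons]
      push_cast
      omega
    · simp only
      omega
  · -- μ = -1
    rcases H with _ | ⟨⟨l, m⟩, H''⟩ <;> rcases v with _ | v''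
    · exact absurd h (by simp)
    · simp only [Option.some.injEq, Prod.mk.injEq] at h
      obtain ⟨rfl, rfl, rfl⟩ := h
      refine ⟨hH, by simp, by push_cast; omega⟩
    · simp only [Option.some.injEq, Prod.mk.injEq] at h
      obtain ⟨rfl, rfl, rfl⟩ := h
      have hlm : l + m + 1 ≤ p := hH (l, m) (by simp)
      refine ⟨fun x hx => hH x (by simp [hx]), ?_, ?_⟩
      · simp only [wtm, List.map_cons, List.sum_cons]
        push_cast
        omega
      · simp only
        push_cast
        omega
    · have hlm : l + m + 1 ≤ p := hH (l, m) (by simp)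
      simp only [Option.some.injEq, Prod.mk.injEq] at h
      split_ifs at h with h4
      · simp only [Option.some.injEq, Prod.mk.injEq] at h
        obtain ⟨rfl, rfl, rfl⟩ := h
        refine ⟨fun x hx => hH x (by simp [hx]), ?_, ?_⟩
        · simp only [wtm, List.map_cons, List.sum_cons]
          push_cast
          omega
        · simp only
          push_cast
          omega
      · simp only [Option.some.injEq, Prod.mk.injEq] at h
        obtain ⟨rfl, rfl, rfl⟩ := h
        refine ⟨?_, ?_, by push_cast; omega⟩
        · intro x hx
          rcases List.mem_cons.mp hx with rfl | hx
          · show l + (m + 1) + 1 ≤ p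
            omega
          · exact hH x (by simp [hx])
        · simp only [wtm, List.map_cons, List.sum_cons]
          push_cast
          omega

theorem phiRun_inv (p : ℕ) (hp : 1 ≤ p) (w : List ℤ) (hw : SigmaWord p w) :
    ∀ (i : ℕ) (H : List (ℕ × ℕ)) (v : ℕ) (out : List (ℤ × ℤ)),
      PhiRun p [] 0 (w.take i) = some (H, v, out) →
        HValid p H ∧ (wtm H : ℤ) ≤ (out.sum).1 ∧ (v : ℤ) ≤ (out.sum).2 := by
  intro i
  induction i with
  | zero =>
    intro H v out h
    rw [List.take_zero, show PhiRun p [] 0 [] = some ([], 0, []) from rfl] at h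
    simp only [Option.some.injEq, Prod.mk.injEq] at h
    obtain ⟨rfl, rfl, rfl⟩ := h
    refine ⟨fun x hx => by simp at hx, by simp [wtm], by simp⟩
  | succ i ih =>
    intro H v out h
    rw [List.take_succ, phiRun_append] at h
    cases h0 : PhiRun p [] 0 (w.take i) with
    | none => rw [h0] at h; exact absurd h (by simp)
    | some r =>
      obtain ⟨H0, v0, o0⟩ := r
      rw [h0] at h
      obtain ⟨hval, hwt, hv⟩ := ih H0 v0 o0 h0
      cases hgi : w[i]? with
      | none =>
        rw [hgi] at h
        simp only [Option.toList] at h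
        rw [show PhiRun p H0 v0 [] = some (H0, v0, []) from rfl] at h
        simp only [Option.map_some, Option.some.injEq, Prod.mk.injEq] at h
        obtain ⟨rfl, rfl, rfl⟩ := h
        simpa using ⟨hval, hwt, hv⟩
      | some μ =>
        rw [hgi] at h
        have hμmem : μ ∈ w := by
          have := List.getElem?_eq_some_iff.mp hgi
          obtain ⟨hi, hget⟩ := this
          exact hget ▸ List.getElem_mem hi
        obtain ⟨hμ1, hμ2⟩ := hw μ hμmem
        simp only [Option.toList] at h
        rw [phiRun_single] at h
        cases hf : Fstep p μ H0 v0 with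
        | none => rw [hf] at h; exact absurd h (by simp)
        | some s =>
          obtain ⟨H', v', a⟩ := s
          rw [hf] at h
          simp only [Option.map_some, Option.some.injEq, Prod.mk.injEq] at h
          obtain ⟨rfl, rfl, rfl⟩ := h
          obtain ⟨hval', hwt', hv'⟩ := fstep_inv p hp μ hμ1 hμ2 H0 _ v0 _ _ hval hf
          rw [List.sum_append]
          simp only [List.sum_cons, List.sum_nil, add_zero, Prod.fst_add, Prod.snd_add]
          exact ⟨hval', by omega, by omega⟩

theorem output_prefix_sums_dominate_counters (p : ℕ) (hp : 1 ≤ p)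
    (w : List ℤ) (hw : SigmaWord p w) (hdef : (PhiRun p [] 0 w).isSome) :
    ∀ (i : ℕ) (H : List (ℕ × ℕ)) (v : ℕ) (out : List (ℤ × ℤ)),
      PhiRun p [] 0 (w.take i) = some (H, v, out) →
        (wtm H : ℤ) ≤ (out.sum).1 ∧ (v : ℤ) ≤ (out.sum).2 ∧
          0 ≤ (out.sum).1 ∧ 0 ≤ (out.sum).2 := by
  
  intro i H v out h
  obtain ⟨hval, hwt, hv⟩ := phiRun_inv p hp w hw i H v out h
  refine ⟨hwt, hv, le_trans (Int.natCast_nonneg _) hwt, le_trans (Int.natCast_nonneg _) hv⟩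
end
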